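/- arXiv:2305.01942 — 8 statements merged into one kernel-verified Lean document; each statement's English description precedes it below -/
import Mathlib

section
/- Let p ≥ 1 be an integer, Y a d×d real positive definite matrix, and v ∈ ℝ^d a vector with vᵀY⁻¹v < 1. Then Y − vvᵀ is positive definite and tr((Y − vvᵀ)^{−p}) ≤ tr(Y^{−p}) + Σ_{i=1}^{p} C(p,i) · (vᵀY⁻¹v)^{i−1} · (vᵀY^{−p−1}v) / (1 − vᵀY⁻¹v)^i. -/
/-!
Write `A = Y⁻¹`, `s = vᵀAv`, `c = (1 - s)⁻¹` and `f j = vᵀAʲv`. Positivity of `Y - vvᵀ` is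
Cauchy–Schwarz for the form of `Y`, and Sherman–Morrison gives `(Y - vvᵀ)⁻¹ = A + c (Av)(Av)ᵀ =: B`.
Telescoping `Bᵖ - Aᵖ` and taking traces, `tr Bᵖ - tr Aᵖ = c ∑_{k<p} (A^{p-k}v)ᵀ Bᵏ (Av)`.
Peeling off one factor of `B` at a time, each rank-one part costs a factor `c` and a product of
moments; since `f` is log-convex (Cauchy–Schwarz again), `f (i+1) f (j+1) ≤ f 1 f (i+j+1)`, and with
`1 + s c = c` this yields `(A^{a+1}v)ᵀ Bᵏ (A^{b+1}v) ≤ cᵏ f (a+b+k+2)`. So the increment is at most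
`f (p+1) (c + ⋯ + cᵖ)`, and expanding `cᵖ = (1 + s c)ᵖ` binomially turns this geometric sum into the
stated one.
-/

open Finset Matrix

theorem pow_sub_pow_eq_sum_pow_mul_sub_mul_pow {R : Type*} [Ring R] (x y : R) (n : ℕ) :
    x ^ n - y ^ n = ∑ k ∈ range n, x ^ k * (x - y) * y ^ (n - 1 - k) := by
  have hterm : ∀ k ∈ range n, x ^ k * (x - y) * y ^ (n - 1 - k) =
      x ^ (k + 1) * y ^ (n - (k + 1)) - x ^ k * y ^ (n - k) := by
    intro k _
    obtain ⟨m, rfl⟩ : ∃ m, n = k + 1 + m := ⟨n - (k + 1), by grind⟩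
    rw [show k + 1 + m - 1 - k = m by omega, show k + 1 + m - (k + 1) = m by omega,
      show k + 1 + m - k = m + 1 by omega, pow_succ, pow_succ']
    noncomm_ring
  rw [sum_congr rfl hterm, sum_range_sub (fun k => x ^ k * y ^ (n - k))]
  simp

theorem geom_sum_add_one_eq_sum_choose {R : Type*} [CommRing R] (x : R) (n : ℕ) :
    ∑ i ∈ range n, (x + 1) ^ i = ∑ i ∈ range n, (n.choose (i + 1) : R) * x ^ i := by
  simpa [Polynomial.eval_finsetSum] using
    congrArg (Polynomial.eval x) (Polynomial.geom_sum_X_comp_X_add_one_eq_sum (R := R) n)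

theorem sum_range_inv_one_sub_pow_succ {K : Type*} [Field K] {s : K} (hs : s ≠ 1) (p : ℕ) :
    ∑ k ∈ range p, (1 - s)⁻¹ ^ (k + 1) =
      ∑ i ∈ Icc 1 p, (p.choose i : K) * s ^ (i - 1) / (1 - s) ^ i := by
  have hc : s * (1 - s)⁻¹ + 1 = (1 - s)⁻¹ := by
    field_simp [sub_ne_zero.mpr hs.symm]; ring
  have hgeom := geom_sum_add_one_eq_sum_choose (s * (1 - s)⁻¹) p
  rw [hc] at hgeom
  calc ∑ k ∈ range p, (1 - s)⁻¹ ^ (k + 1) = (1 - s)⁻¹ * ∑ k ∈ range p, (1 - s)⁻¹ ^ k := by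
        rw [mul_sum]; exact sum_congr rfl fun k _ => pow_succ' _ _
    _ = ∑ i ∈ range p, (p.choose (i + 1) : K) * s ^ i / (1 - s) ^ (i + 1) := by
        rw [hgeom, mul_sum]
        exact sum_congr rfl fun i _ => by rw [div_eq_mul_inv, ← inv_pow, mul_pow, pow_succ]; ring
    _ = _ := by
        rw [← Ico_add_one_right_eq_Icc, sum_Ico_eq_sum_range]
        simp [add_comm]

theorem mul_le_mul_shift_of_sq_le_mul {f : ℕ → ℝ} (hpos : ∀ k, 0 < f k)
    (hlog : ∀ k, f (k + 1) ^ 2 ≤ f k * f (k + 2)) {a b : ℕ} (hab : a ≤ b) (m : ℕ) :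
    f (a + m) * f b ≤ f a * f (b + m) := by
  set g : ℕ → ℝ := fun k => f (k + 1) / f k
  have hg : Monotone g := monotone_nat_of_le_succ fun k => by
    rw [div_le_div_iff₀ (hpos k) (hpos (k + 1))]
    nlinarith [hlog k]
  have hfg : ∀ k, f (k + 1) = g k * f k := fun k => (div_mul_cancel₀ _ (hpos k).ne').symm
  induction m with
  | zero => simp
  | succ m ih =>
    rw [← add_assoc, ← add_assoc, hfg, hfg]
    have := mul_le_mul (hg (Nat.add_le_add_right hab m)) ih
      (mul_pos (hpos _) (hpos _)).le (div_pos (hpos _) (hpos _)).le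
    linarith

namespace Matrix

variable {n : Type*} [Fintype n]

theorem IsSymm.mulVec_dotProduct {R : Type*} [CommSemiring R] {P : Matrix n n R}
    (hP : P.IsSymm) (x y : n → R) : (P *ᵥ x) ⬝ᵥ y = x ⬝ᵥ P *ᵥ y := by
  rw [dotProduct_mulVec, ← mulVec_transpose, hP.eq]

theorem add_smul_vecMulVec_mulVec {R : Type*} [CommSemiring R] (A : Matrix n n R) (c : R)
    (w y : n → R) : (A + c • vecMulVec w w) *ᵥ y = A *ᵥ y + (c * (w ⬝ᵥ y)) • w := by
  rw [add_mulVec, smul_mulVec, vecMulVec_mulVec, op_smul_eq_smul, smul_smul]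

theorem PosSemidef.dotProduct_mulVec_sq_le {M : Matrix n n ℝ} (hM : M.PosSemidef)
    (x y : n → ℝ) : (x ⬝ᵥ M *ᵥ y) ^ 2 ≤ (x ⬝ᵥ M *ᵥ x) * (y ⬝ᵥ M *ᵥ y) := by
  classical
  have := (toBilin' M).apply_mul_apply_le_of_forall_zero_le
    (fun z => by simpa [toBilin'_apply'] using hM.dotProduct_mulVec_nonneg z) x y
  rwa [toBilin'_apply', toBilin'_apply', toBilin'_apply', toBilin'_apply', dotProduct_comm y,
    (isHermitian_iff_isSymm.mp hM.isHermitian).mulVec_dotProduct, ← sq] at this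

variable [DecidableEq n]

theorem IsSymm.pow_mulVec_dotProduct_pow_mulVec {R : Type*} [CommSemiring R]
    {A : Matrix n n R} (hA : A.IsSymm) (v : n → R) (i j l : ℕ) :
    (A ^ i *ᵥ v) ⬝ᵥ A ^ j *ᵥ A ^ l *ᵥ v = v ⬝ᵥ A ^ (i + j + l) *ᵥ v := by
  rw [(hA.pow i).mulVec_dotProduct, mulVec_mulVec, mulVec_mulVec, ← pow_add, ← pow_add,
    add_assoc]

theorem trace_pow_mul_smul_vecMulVec_mul_pow {R : Type*} [CommRing R] {A : Matrix n n R}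
    (hA : A.IsSymm) (B : Matrix n n R) (c : R) (w : n → R) (k m : ℕ) :
    (B ^ k * (c • vecMulVec w w) * A ^ m).trace = c * ((A ^ m *ᵥ w) ⬝ᵥ B ^ k *ᵥ w) := by
  rw [Matrix.mul_smul, Matrix.smul_mul, trace_smul, mul_vecMulVec, vecMulVec_mul,
    trace_vecMulVec, ← mulVec_transpose, (hA.pow m).eq, dotProduct_comm, smul_eq_mul]

theorem inv_sub_vecMulVec {K : Type*} [Field K] {Y : Matrix n n K} (hY : IsUnit Y.det)
    {u w : n → K} (h : w ⬝ᵥ Y⁻¹ *ᵥ u ≠ 1) :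
    (Y - vecMulVec u w)⁻¹ =
      Y⁻¹ + (1 - w ⬝ᵥ Y⁻¹ *ᵥ u)⁻¹ • vecMulVec (Y⁻¹ *ᵥ u) (w ᵥ* Y⁻¹) := by
  set s := w ⬝ᵥ Y⁻¹ *ᵥ u
  have hc : (1 - s)⁻¹ * s = (1 - s)⁻¹ - 1 := by
    field_simp [sub_ne_zero.mpr h.symm]; ring
  apply inv_eq_right_inv
  rw [sub_mul, mul_add, mul_add, mul_nonsing_inv _ hY, Matrix.mul_smul, Matrix.mul_smul,
    mul_vecMulVec, mulVec_mulVec, mul_nonsing_inv _ hY, one_mulVec, vecMulVec_mul,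
    vecMulVec_mul_vecMulVec, vecMulVec_smul, smul_smul, hc]
  module

theorem PosDef.sub_vecMulVec {Y : Matrix n n ℝ} (hY : Y.PosDef) {v : n → ℝ}
    (hv : v ⬝ᵥ Y⁻¹ *ᵥ v < 1) : (Y - vecMulVec v v).PosDef := by
  have hvv : (vecMulVec v v).IsHermitian := by
    simpa using (posSemidef_vecMulVec_self_star v).isHermitian
  refine .of_dotProduct_mulVec_pos (hY.isHermitian.sub hvv) fun x hx => ?_
  have hYx : 0 < x ⬝ᵥ Y *ᵥ x := by simpa using hY.dotProduct_mulVec_pos hx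
  have hvx : (v ⬝ᵥ x) ^ 2 ≤ (v ⬝ᵥ Y⁻¹ *ᵥ v) * (x ⬝ᵥ Y *ᵥ x) := by
    have hYs : Y.IsSymm := isHermitian_iff_isSymm.mp hY.isHermitian
    have hYY : Y *ᵥ Y⁻¹ *ᵥ v = v := by
      rw [mulVec_mulVec, mul_nonsing_inv _ ((isUnit_iff_isUnit_det Y).mp hY.isUnit), one_mulVec]
    have e1 : (Y⁻¹ *ᵥ v) ⬝ᵥ Y *ᵥ x = v ⬝ᵥ x := by rw [← hYs.mulVec_dotProduct, hYY]
    have e2 : (Y⁻¹ *ᵥ v) ⬝ᵥ Y *ᵥ Y⁻¹ *ᵥ v = v ⬝ᵥ Y⁻¹ *ᵥ v := by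
      rw [← hYs.mulVec_dotProduct, hYY]
    have := hY.posSemidef.dotProduct_mulVec_sq_le (Y⁻¹ *ᵥ v) x
    rwa [e1, e2] at this
  have hs : 0 ≤ v ⬝ᵥ Y⁻¹ *ᵥ v := by simpa using hY.inv.posSemidef.dotProduct_mulVec_nonneg v
  rw [star_trivial, sub_mulVec, dotProduct_sub, vecMulVec_mulVec, op_smul_eq_smul,
    dotProduct_smul, smul_eq_mul, dotProduct_comm x v]
  nlinarith

theorem PosSemidef.dotProduct_pow_mulVec_sq_le {A : Matrix n n ℝ} (hA : A.PosSemidef)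
    (v : n → ℝ) (k : ℕ) :
    (v ⬝ᵥ A ^ (k + 1) *ᵥ v) ^ 2 ≤ (v ⬝ᵥ A ^ k *ᵥ v) * (v ⬝ᵥ A ^ (k + 2) *ᵥ v) := by
  have hAs : A.IsSymm := isHermitian_iff_isSymm.mp hA.isHermitian
  -- Cauchy–Schwarz for the form `A ^ r` applied to `A ^ a *ᵥ v` and `A ^ (a + 1) *ᵥ v`.
  obtain ⟨a, r, rfl⟩ : ∃ a r, k = a + r + a := ⟨k / 2, k % 2, by omega⟩
  have := (hA.pow r).dotProduct_mulVec_sq_le (A ^ a *ᵥ v) (A ^ (a + 1) *ᵥ v)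
  rwa [hAs.pow_mulVec_dotProduct_pow_mulVec, hAs.pow_mulVec_dotProduct_pow_mulVec,
    hAs.pow_mulVec_dotProduct_pow_mulVec, ← add_assoc,
    show a + 1 + r + (a + 1) = a + r + a + 2 by omega] at this

theorem PosDef.dotProduct_pow_mulVec_pos {A : Matrix n n ℝ} (hA : A.PosDef) {v : n → ℝ}
    (hv : v ≠ 0) (j : ℕ) : 0 < v ⬝ᵥ A ^ j *ᵥ v := by
  simpa using
    ((hA.posSemidef.pow j).posDef_iff_isUnit.mpr (hA.isUnit.pow j)).dotProduct_mulVec_pos hv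

theorem PosDef.dotProduct_pow_mulVec_mul_le {A : Matrix n n ℝ} (hA : A.PosDef) (v : n → ℝ)
    (i j : ℕ) : (v ⬝ᵥ A ^ (i + 1) *ᵥ v) * (v ⬝ᵥ A ^ (j + 1) *ᵥ v) ≤
      (v ⬝ᵥ A *ᵥ v) * (v ⬝ᵥ A ^ (i + j + 1) *ᵥ v) := by
  rcases eq_or_ne v 0 with rfl | hv
  · simp
  have := mul_le_mul_shift_of_sq_le_mul (hA.dotProduct_pow_mulVec_pos hv)
    (hA.posSemidef.dotProduct_pow_mulVec_sq_le v) (Nat.le_add_left 1 i) j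
  rwa [mul_comm, add_comm 1, add_right_comm i, pow_one] at this

theorem PosDef.dotProduct_add_smul_vecMulVec_pow_mulVec_le {A : Matrix n n ℝ} (hA : A.PosDef)
    (v : n → ℝ) {c : ℝ} (hc0 : 0 ≤ c) (hc : 1 + (v ⬝ᵥ A *ᵥ v) * c = c) (a k b : ℕ) :
    (A ^ (a + 1) *ᵥ v) ⬝ᵥ (A + c • vecMulVec (A *ᵥ v) (A *ᵥ v)) ^ k *ᵥ A ^ (b + 1) *ᵥ v ≤
      c ^ k * (v ⬝ᵥ A ^ (a + b + k + 2) *ᵥ v) := by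
  have hAs : A.IsSymm := isHermitian_iff_isSymm.mp hA.isHermitian
  induction k generalizing b with
  | zero =>
    rw [pow_zero, one_mulVec, pow_zero, one_mul, (hAs.pow _).mulVec_dotProduct, mulVec_mulVec,
      ← pow_add, show a + 1 + (b + 1) = a + b + 0 + 2 by omega]
  | succ k ih =>
    set B := A + c • vecMulVec (A *ᵥ v) (A *ᵥ v)
    have hBA : B *ᵥ A ^ (b + 1) *ᵥ v =
        A ^ (b + 2) *ᵥ v + (c * (v ⬝ᵥ A ^ (b + 2) *ᵥ v)) • A *ᵥ v := by
      rw [add_smul_vecMulVec_mulVec, mulVec_mulVec, ← pow_succ', hAs.mulVec_dotProduct,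
        mulVec_mulVec, ← pow_succ']
    have hsplit : (A ^ (a + 1) *ᵥ v) ⬝ᵥ B ^ (k + 1) *ᵥ A ^ (b + 1) *ᵥ v =
        (A ^ (a + 1) *ᵥ v) ⬝ᵥ B ^ k *ᵥ A ^ (b + 1 + 1) *ᵥ v +
          c * (v ⬝ᵥ A ^ (b + 2) *ᵥ v) * ((A ^ (a + 1) *ᵥ v) ⬝ᵥ B ^ k *ᵥ A ^ (0 + 1) *ᵥ v) := by
      rw [pow_succ B k, ← mulVec_mulVec, hBA, mulVec_add, mulVec_smul, dotProduct_add,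
        dotProduct_smul, smul_eq_mul, zero_add, pow_one]
    have hchain := hA.dotProduct_pow_mulVec_mul_le v (a + k + 1) (b + 1)
    rw [show a + k + 1 + 1 = a + 0 + k + 2 by omega, show b + 1 + 1 = b + 2 by omega,
      show a + k + 1 + (b + 1) + 1 = a + (b + 1) + k + 2 by omega] at hchain
    have hfb : 0 ≤ v ⬝ᵥ A ^ (b + 2) *ᵥ v := by
      simpa using (hA.posSemidef.pow (b + 2)).dotProduct_mulVec_nonneg v
    have h0 := mul_le_mul_of_nonneg_left (ih 0) (mul_nonneg hc0 hfb)
    have hchain' := mul_le_mul_of_nonneg_left hchain (mul_nonneg hc0 (pow_nonneg hc0 k))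
    rw [hsplit, show a + b + (k + 1) + 2 = a + (b + 1) + k + 2 by omega, pow_succ c k]
    linear_combination ih (b + 1) + h0 + hchain' +
      c ^ k * (v ⬝ᵥ A ^ (a + (b + 1) + k + 2) *ᵥ v) * hc

theorem PosDef.trace_add_smul_vecMulVec_pow_le {A : Matrix n n ℝ} (hA : A.PosDef)
    (v : n → ℝ) {c : ℝ} (hc0 : 0 ≤ c) (hc : 1 + (v ⬝ᵥ A *ᵥ v) * c = c) (p : ℕ) :
    ((A + c • vecMulVec (A *ᵥ v) (A *ᵥ v)) ^ p).trace ≤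
      (A ^ p).trace + (v ⬝ᵥ A ^ (p + 1) *ᵥ v) * ∑ k ∈ range p, c ^ (k + 1) := by
  set B := A + c • vecMulVec (A *ᵥ v) (A *ᵥ v)
  have hterm : ∀ k ∈ range p, (B ^ k * (B - A) * A ^ (p - 1 - k)).trace ≤
      (v ⬝ᵥ A ^ (p + 1) *ᵥ v) * c ^ (k + 1) := by
    intro k hk
    have hkey := hA.dotProduct_add_smul_vecMulVec_pow_mulVec_le v hc0 hc (p - 1 - k) k 0
    rw [show p - 1 - k + 0 + k + 2 = p + 1 by grind, pow_one] at hkey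
    rw [add_sub_cancel_left, trace_pow_mul_smul_vecMulVec_mul_pow
      (isHermitian_iff_isSymm.mp hA.isHermitian), mulVec_mulVec, ← pow_succ]
    calc _ ≤ c * (c ^ k * (v ⬝ᵥ A ^ (p + 1) *ᵥ v)) := mul_le_mul_of_nonneg_left hkey hc0
      _ = _ := by ring
  calc (B ^ p).trace
      = (A ^ p).trace + ∑ k ∈ range p, (B ^ k * (B - A) * A ^ (p - 1 - k)).trace := by
        rw [← trace_sum, ← pow_sub_pow_eq_sum_pow_mul_sub_mul_pow, trace_sub, add_sub_cancel]
    _ ≤ _ := by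
        rw [mul_sum]
        gcongr with k hk
        exact hterm k hk

end Matrix

theorem stmt2_general {d : ℕ} (p : ℕ)
    (Y : Matrix (Fin d) (Fin d) ℝ) (hY : Y.PosDef)
    (v : Fin d → ℝ) (hv : v ⬝ᵥ Y⁻¹ *ᵥ v < 1) :
    (Y - vecMulVec v v).PosDef ∧
    ((Y - vecMulVec v v)⁻¹ ^ p).trace ≤
      (Y⁻¹ ^ p).trace + ∑ i ∈ Finset.Icc 1 p, (p.choose i : ℝ) *
        (v ⬝ᵥ Y⁻¹ *ᵥ v) ^ (i - 1) * (v ⬝ᵥ (Y⁻¹ ^ (p + 1)) *ᵥ v) /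
          (1 - v ⬝ᵥ Y⁻¹ *ᵥ v) ^ i := by
  set s := v ⬝ᵥ Y⁻¹ *ᵥ v
  have hs : s ≠ 1 := hv.ne
  have hc : 1 + s * (1 - s)⁻¹ = (1 - s)⁻¹ := by
    field_simp [sub_ne_zero.mpr hs.symm]; ring
  have hSM : (Y - vecMulVec v v)⁻¹ = Y⁻¹ + (1 - s)⁻¹ • vecMulVec (Y⁻¹ *ᵥ v) (Y⁻¹ *ᵥ v) := by
    rw [inv_sub_vecMulVec ((isUnit_iff_isUnit_det Y).mp hY.isUnit) hs, ← mulVec_transpose,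
      (isHermitian_iff_isSymm.mp hY.inv.isHermitian).eq]
  refine ⟨hY.sub_vecMulVec hv, ?_⟩
  calc _ ≤ (Y⁻¹ ^ p).trace + (v ⬝ᵥ Y⁻¹ ^ (p + 1) *ᵥ v) * ∑ k ∈ range p, (1 - s)⁻¹ ^ (k + 1) :=
        hSM ▸ hY.inv.trace_add_smul_vecMulVec_pow_le v (inv_nonneg.mpr (sub_nonneg.mpr hv.le)) hc p
    _ = _ := by
        rw [sum_range_inv_one_sub_pow_succ hs, mul_sum]
        congr 1
        exact sum_congr rfl fun i _ => by ring

theorem stmt2 {d : ℕ} (p : ℕ) (hp : 1 ≤ p)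
    (Y : Matrix (Fin d) (Fin d) ℝ) (hY : Y.PosDef)
    (v : Fin d → ℝ) (hv : v ⬝ᵥ Y⁻¹ *ᵥ v < 1) :
    (Y - vecMulVec v v).PosDef ∧
    ((Y - vecMulVec v v)⁻¹ ^ p).trace ≤
      (Y⁻¹ ^ p).trace + ∑ i ∈ Finset.Icc 1 p, (p.choose i : ℝ) *
        (v ⬝ᵥ Y⁻¹ *ᵥ v) ^ (i - 1) * (v ⬝ᵥ (Y⁻¹ ^ (p + 1)) *ᵥ v) /
          (1 - v ⬝ᵥ Y⁻¹ *ᵥ v) ^ i :=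
  stmt2_general p Y hY v hv
end

section
/- Let A and B be d×d real positive definite matrices and p ≥ 1 an integer. Then tr(A · B^{−p−1}) ≥ (tr(B^{−p}) / tr(A^{−p}))^{1/p} · tr(B^{−p}). -/
/-!
Diagonalize `A = V diag(ν) Vᵀ` and `B⁻¹ = U diag(μ) Uᵀ` and put `w j k = ((Vᵀ U) j k)² ≥ 0`. Then
`S = tr B⁻ᵖ = ∑ w μₖᵖ`, `X = tr (A B⁻ᵖ⁻¹) = ∑ w νⱼ μₖᵖ⁺¹` and `T = tr A⁻ᵖ = ∑ w νⱼ⁻ᵖ`, so the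
termwise AM-GM inequality `(p + 1) c μᵖ ≤ p ν μᵖ⁺¹ + cᵖ⁺¹ ν⁻ᵖ` gives
`(p + 1) c S ≤ p X + cᵖ⁺¹ T` for all `c ≥ 0`. The choice `cᵖ = S / T` turns this into `c S ≤ X`.
-/

open Matrix Finset Unitary

theorem mul_pow_le_add_pow_succ (n : ℕ) {x y : ℝ} (hx : 0 ≤ x) (hy : 0 ≤ y) :
    (n + 1) * x * y ^ n ≤ n * y ^ (n + 1) + x ^ (n + 1) := by
  rcases hy.eq_or_lt with rfl | hy
  · cases n <;> simp [hx]
  have bernoulli :=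
    one_add_mul_sub_le_pow (a := x / y) (by linarith [div_nonneg hx hy.le]) (n + 1)
  calc (n + 1) * x * y ^ n
      = y ^ (n + 1) * (1 + (n + 1 : ℕ) * (x / y - 1)) + n * y ^ (n + 1) := by
        field_simp; push_cast; ring
    _ ≤ y ^ (n + 1) * (x / y) ^ (n + 1) + n * y ^ (n + 1) := by gcongr
    _ = n * y ^ (n + 1) + x ^ (n + 1) := by rw [div_pow]; field_simp; ring

theorem mul_pow_le_mul_pow_succ_add_inv_pow (p : ℕ) {c l m : ℝ} (hc : 0 ≤ c) (hl : 0 < l)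
    (hm : 0 ≤ m) :
    (p + 1) * c * m ^ p ≤ p * (l * m ^ (p + 1)) + c ^ (p + 1) * l⁻¹ ^ p := by
  have young := mul_pow_le_add_pow_succ p hc (mul_nonneg hl.le hm)
  calc (p + 1) * c * m ^ p = (l ^ p)⁻¹ * ((p + 1) * c * (l * m) ^ p) := by field_simp; ring
    _ ≤ (l ^ p)⁻¹ * (p * (l * m) ^ (p + 1) + c ^ (p + 1)) := by gcongr
    _ = p * (l * m ^ (p + 1)) + c ^ (p + 1) * l⁻¹ ^ p := by rw [inv_pow]; field_simp; ring

theorem sum_mul_pow_le_sum_mul_pow_succ_add_sum_inv_pow {ι : Type*} (s : Finset ι) (p : ℕ)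
    {c : ℝ} (hc : 0 ≤ c) {w l m : ι → ℝ} (hw : ∀ k ∈ s, 0 ≤ w k) (hl : ∀ k ∈ s, 0 < l k)
    (hm : ∀ k ∈ s, 0 ≤ m k) :
    (p + 1) * c * ∑ k ∈ s, w k * m k ^ p ≤
      p * ∑ k ∈ s, w k * l k * m k ^ (p + 1) + c ^ (p + 1) * ∑ k ∈ s, w k * (l k)⁻¹ ^ p := by
  simp only [mul_sum, ← sum_add_distrib]
  refine sum_le_sum fun k hk => ?_
  have term := mul_le_mul_of_nonneg_left
    (mul_pow_le_mul_pow_succ_add_inv_pow p hc (hl k hk) (hm k hk)) (hw k hk)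
  linarith

theorem rpow_div_mul_le_of_forall_mul_le {p : ℕ} (hp : 0 < p) {S T X : ℝ} (hS : 0 ≤ S)
    (hT : 0 ≤ T) (h : ∀ c, 0 ≤ c → (p + 1) * c * S ≤ p * X + c ^ (p + 1) * T) :
    (S / T) ^ ((1 : ℝ) / p) * S ≤ X := by
  have hcT : ((S / T) ^ ((1 : ℝ) / p)) ^ p * T ≤ S := by
    rw [one_div, Real.rpow_inv_natCast_pow (div_nonneg hS hT) hp.ne']
    rcases hT.eq_or_lt with rfl | hT
    · simpa using hS
    · rw [div_mul_cancel₀ S hT.ne']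
  set c := (S / T) ^ ((1 : ℝ) / p)
  have hc : 0 ≤ c := by positivity
  have hc_young := h c hc
  have hpX : p * (c * S) ≤ p * X := by
    nlinarith [mul_le_mul_of_nonneg_left hcT hc, pow_succ c p]
  exact le_of_mul_le_mul_left hpX (by exact_mod_cast hp)

namespace Matrix

variable {n : Type*} [Fintype n] [DecidableEq n]

theorem trace_diagonal_mul_mul_diagonal_mul_star (M : Matrix n n ℝ) (f g : n → ℝ) :
    (diagonal f * M * diagonal g * star M).trace =
      ∑ k : n × n, M k.1 k.2 ^ 2 * f k.1 * g k.2 := by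
  simp only [trace, diag_apply, mul_apply, star_apply, diagonal_apply, Fintype.sum_prod_type]
  simp only [star_trivial, mul_ite, ite_mul, mul_zero, zero_mul, sum_ite_eq, sum_ite_eq',
    mem_univ, if_true]
  exact sum_congr rfl fun _ _ => sum_congr rfl fun _ _ => by ring

theorem trace_conj_diagonal_mul_conj_diagonal (V U : unitary (Matrix n n ℝ)) (f g : n → ℝ) :
    (conjStarAlgAut ℝ _ V (diagonal f) * conjStarAlgAut ℝ _ U (diagonal g)).trace =
      ∑ k : n × n, (star (V : Matrix n n ℝ) * U) k.1 k.2 ^ 2 * f k.1 * g k.2 := by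
  rw [← trace_diagonal_mul_mul_diagonal_mul_star, star_mul, star_star]
  calc _ = (V * (diagonal f * star (V : Matrix n n ℝ) * U * diagonal g *
        star (U : Matrix n n ℝ))).trace := by
        simp only [conjStarAlgAut_apply, Matrix.mul_assoc]
    _ = _ := by rw [trace_mul_comm]; simp only [Matrix.mul_assoc]

theorem IsHermitian.eq_conj_diagonal_eigenvalues {A : Matrix n n ℝ} (hA : A.IsHermitian) :
    A = conjStarAlgAut ℝ _ hA.eigenvectorUnitary (diagonal hA.eigenvalues) := by
  simpa [RCLike.ofReal_real_eq_id] using hA.spectral_theorem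

theorem PosDef.inv_eq_conj_diagonal_inv_eigenvalues {A : Matrix n n ℝ} (hA : A.PosDef) :
    A⁻¹ = conjStarAlgAut ℝ _ hA.1.eigenvectorUnitary (diagonal hA.1.eigenvalues⁻¹) := by
  refine inv_eq_left_inv ?_
  conv_lhs => rhs; rw [hA.1.eq_conj_diagonal_eigenvalues]
  rw [← map_mul, diagonal_mul_diagonal]
  simp [fun i => (hA.eigenvalues_pos i).ne']

end Matrix

theorem stmt3 {d : ℕ} (p : ℕ) (hp : 1 ≤ p)
    (A B : Matrix (Fin d) (Fin d) ℝ) (hA : A.PosDef) (hB : B.PosDef) :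
    ((B⁻¹ ^ p).trace / (A⁻¹ ^ p).trace) ^ ((1 : ℝ) / p) * (B⁻¹ ^ p).trace ≤
      (A * B⁻¹ ^ (p + 1)).trace := by
  have hC := hB.inv
  set V := hA.1.eigenvectorUnitary
  set U := hC.1.eigenvectorUnitary
  set ν := hA.1.eigenvalues
  set μ := hC.1.eigenvalues
  set w : Fin d × Fin d → ℝ := fun k => (star (V : Matrix (Fin d) (Fin d) ℝ) * U) k.1 k.2 ^ 2
  have hA_eq : A = conjStarAlgAut ℝ _ V (diagonal ν) := hA.1.eq_conj_diagonal_eigenvalues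
  have hC_pow (k : ℕ) : B⁻¹ ^ k = conjStarAlgAut ℝ _ U (diagonal (μ ^ k)) := by
    rw [← diagonal_pow, map_pow, ← hC.1.eq_conj_diagonal_eigenvalues]
  have hA_inv_pow : A⁻¹ ^ p = conjStarAlgAut ℝ _ V (diagonal (ν⁻¹ ^ p)) := by
    rw [← diagonal_pow, map_pow, ← hA.inv_eq_conj_diagonal_inv_eigenvalues]
  have hS : (B⁻¹ ^ p).trace = ∑ k, w k * μ k.2 ^ p := by
    rw [← one_mul (B⁻¹ ^ p), hC_pow, ← map_one (conjStarAlgAut ℝ _ V), ← diagonal_one,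
      trace_conj_diagonal_mul_conj_diagonal]
    simp [w]
  have hX : (A * B⁻¹ ^ (p + 1)).trace = ∑ k, w k * ν k.1 * μ k.2 ^ (p + 1) := by
    rw [hC_pow, hA_eq, trace_conj_diagonal_mul_conj_diagonal]
    simp [w]
  have hT : (A⁻¹ ^ p).trace = ∑ k, w k * (ν k.1)⁻¹ ^ p := by
    rw [← mul_one (A⁻¹ ^ p), hA_inv_pow, ← map_one (conjStarAlgAut ℝ _ U), ← diagonal_one,
      trace_conj_diagonal_mul_conj_diagonal]
    simp [w]
  refine rpow_div_mul_le_of_forall_mul_le hp ((hC.posSemidef.pow p).trace_nonneg)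
    ((hA.inv.posSemidef.pow p).trace_nonneg) fun c hc => ?_
  rw [hS, hX, hT]
  exact sum_mul_pow_le_sum_mul_pow_succ_add_sum_inv_pow _ p hc (fun k _ => sq_nonneg _)
    (fun k _ => hA.eigenvalues_pos k.1) (fun k _ => (hC.eigenvalues_pos k.2).le)
end

section
/- Let A and B be d×d real positive definite matrices and p ≥ 1 an integer. Then tr(B^{−p}) ≤ (tr(A · B^{−p−1}))^{p/(p+1)} · (tr(A^{−p}))^{1/(p+1)}. -/
/-!
Diagonalize `B` in an orthonormal eigenbasis `uᵢ`, `B uᵢ = μᵢ uᵢ`, and put `aᵢ = ⟨uᵢ, A uᵢ⟩ > 0`.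
In this basis `tr B⁻ᵖ = ∑ μᵢ⁻ᵖ` and `tr (A B⁻ᵖ⁻¹) = ∑ aᵢ μᵢ⁻ᵖ⁻¹`, while Jensen's inequality for the
convex function `x ↦ x⁻ᵖ`, applied in an eigenbasis `e_j` of `A` with the probability weights `⟨e_j, uᵢ⟩²`,
gives `aᵢ⁻ᵖ ≤ ⟨uᵢ, A⁻ᵖ uᵢ⟩`, hence `∑ aᵢ⁻ᵖ ≤ tr A⁻ᵖ`. What remains is the commutative case:
Hölder's inequality with exponents `(p+1)/p` and `p+1` for the factorization
`μᵢ⁻ᵖ = (aᵢ μᵢ⁻ᵖ⁻¹)^(p/(p+1)) · (aᵢ⁻ᵖ)^(1/(p+1))`.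
-/

open Matrix Finset

lemma Matrix.trace_eq_sum_star_dotProduct_mulVec {𝕜 n : Type*} [RCLike 𝕜] [Fintype n]
    (M : Matrix n n 𝕜) (b : OrthonormalBasis n 𝕜 (EuclideanSpace 𝕜 n)) :
    M.trace = ∑ i, star ⇑(b i) ⬝ᵥ M *ᵥ ⇑(b i) := by
  classical
  have h := LinearMap.trace_eq_sum_inner (toEuclideanLin M) b
  rw [toEuclideanLin, toLpLin_eq_toLin, LinearMap.trace_eq_matrix_trace 𝕜 (PiLp.basisFun 2 𝕜 n),
    LinearMap.toMatrix_toLin] at h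
  rw [h]
  refine sum_congr rfl fun i _ => ?_
  rw [EuclideanSpace.inner_eq_star_dotProduct, dotProduct_comm]
  rfl

namespace Matrix

variable {n : Type*} [Fintype n] [DecidableEq n]

lemma pow_mulVec_of_mulVec_eq_smul {R : Type*} [CommSemiring R] {M : Matrix n n R} {v : n → R}
    {c : R} (h : M *ᵥ v = c • v) (k : ℕ) : (M ^ k) *ᵥ v = c ^ k • v := by
  induction k with
  | zero => simp
  | succ k ih => rw [pow_succ, ← mulVec_mulVec, h, mulVec_smul, ih, smul_smul, pow_succ']

lemma inv_mulVec_of_mulVec_eq_smul {K : Type*} [Field K] {M : Matrix n n K} {v : n → K} {c : K}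
    (hM : IsUnit M) (h : M *ᵥ v = c • v) : M⁻¹ *ᵥ v = c⁻¹ • v := by
  have hv : v = c • M⁻¹ *ᵥ v := by
    rw [← mulVec_smul, ← h, mulVec_mulVec, nonsing_inv_mul _ ((isUnit_iff_isUnit_det M).mp hM),
      one_mulVec]
  rcases eq_or_ne c 0 with rfl | hc
  · rw [zero_smul] at hv
    rw [hv, mulVec_zero, smul_zero]
  · rw [hv, smul_smul, inv_mul_cancel₀ hc, one_smul, ← hv]

lemma IsHermitian.inv_pow_mulVec_eigenvectorBasis {A : Matrix n n ℝ} (hA : A.IsHermitian)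
    (hA' : IsUnit A) (k : ℕ) (i : n) :
    (A⁻¹ ^ k) *ᵥ ⇑(hA.eigenvectorBasis i) = (hA.eigenvalues i)⁻¹ ^ k • ⇑(hA.eigenvectorBasis i) :=
  pow_mulVec_of_mulVec_eq_smul
    (inv_mulVec_of_mulVec_eq_smul hA' (hA.mulVec_eigenvectorBasis i)) k

end Matrix

namespace OrthonormalBasis

variable {n : Type*} [Fintype n] (b : OrthonormalBasis n ℝ (EuclideanSpace ℝ n))

lemma dotProduct_self_eq_one (i : n) : ⇑(b i) ⬝ᵥ ⇑(b i) = 1 := by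
  have h : inner ℝ (b i) (b i) = 1 := by
    rw [real_inner_self_eq_norm_sq, b.orthonormal.1 i, one_pow]
  simpa only [EuclideanSpace.inner_eq_star_dotProduct, star_trivial] using h

lemma sum_dotProduct_smul (v : n → ℝ) : ∑ j, (⇑(b j) ⬝ᵥ v) • ⇑(b j) = v := by
  have h := congrArg WithLp.ofLp (b.sum_repr' (WithLp.toLp 2 v))
  simpa [EuclideanSpace.inner_eq_star_dotProduct, dotProduct_comm] using h

lemma dotProduct_mulVec_eq_sum {M : Matrix n n ℝ} {f : n → ℝ}
    (hb : ∀ j, M *ᵥ ⇑(b j) = f j • ⇑(b j)) (v : n → ℝ) :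
    v ⬝ᵥ M *ᵥ v = ∑ j, f j * (⇑(b j) ⬝ᵥ v) ^ 2 := by
  nth_rewrite 2 [← b.sum_dotProduct_smul v]
  rw [mulVec_sum, dotProduct_sum]
  refine sum_congr rfl fun j _ => ?_
  rw [mulVec_smul, hb, dotProduct_smul, dotProduct_smul, dotProduct_comm v, smul_eq_mul,
    smul_eq_mul]
  ring

lemma sum_sq_dotProduct (v : n → ℝ) : ∑ j, (⇑(b j) ⬝ᵥ v) ^ 2 = v ⬝ᵥ v := by
  classical
  simpa using (b.dotProduct_mulVec_eq_sum (M := 1) (f := 1) (by simp) v).symm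

lemma trace_mul_eq_sum_of_mulVec_eq_smul (M : Matrix n n ℝ) {N : Matrix n n ℝ} {f : n → ℝ}
    (hb : ∀ i, N *ᵥ ⇑(b i) = f i • ⇑(b i)) :
    (M * N).trace = ∑ i, (⇑(b i) ⬝ᵥ M *ᵥ ⇑(b i)) * f i := by
  rw [trace_eq_sum_star_dotProduct_mulVec _ b]
  refine sum_congr rfl fun i _ => ?_
  rw [star_trivial, ← mulVec_mulVec, hb, mulVec_smul, dotProduct_smul, smul_eq_mul, mul_comm]

lemma trace_eq_sum_of_mulVec_eq_smul {N : Matrix n n ℝ} {f : n → ℝ}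
    (hb : ∀ i, N *ᵥ ⇑(b i) = f i • ⇑(b i)) : N.trace = ∑ i, f i := by
  classical
  simpa [b.dotProduct_self_eq_one] using b.trace_mul_eq_sum_of_mulVec_eq_smul 1 hb

end OrthonormalBasis

lemma Matrix.PosDef.inv_pow_le_dotProduct_inv_pow_mulVec {n : Type*} [Fintype n] [DecidableEq n]
    {A : Matrix n n ℝ} (hA : A.PosDef) {v : n → ℝ} (hv : v ⬝ᵥ v = 1) (k : ℕ) :
    (v ⬝ᵥ A *ᵥ v)⁻¹ ^ k ≤ v ⬝ᵥ (A⁻¹ ^ k) *ᵥ v := by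
  set b := hA.1.eigenvectorBasis
  have weights : ∑ j, (⇑(b j) ⬝ᵥ v) ^ 2 = 1 := by rw [b.sum_sq_dotProduct, hv]
  have hAv : v ⬝ᵥ A *ᵥ v = ∑ j, (⇑(b j) ⬝ᵥ v) ^ 2 • hA.1.eigenvalues j := by
    rw [b.dotProduct_mulVec_eq_sum hA.1.mulVec_eigenvectorBasis]
    simp only [smul_eq_mul, mul_comm]
  have hAinv_v : v ⬝ᵥ (A⁻¹ ^ k) *ᵥ v = ∑ j, (⇑(b j) ⬝ᵥ v) ^ 2 • (hA.1.eigenvalues j ^ k)⁻¹ := by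
    rw [b.dotProduct_mulVec_eq_sum (hA.1.inv_pow_mulVec_eigenvectorBasis hA.isUnit k)]
    simp only [smul_eq_mul, mul_comm, inv_pow]
  have jensen := (convexOn_zpow (𝕜 := ℝ) (-k)).map_sum_le (t := univ)
    (fun j _ => sq_nonneg (⇑(b j) ⬝ᵥ v)) weights (fun j _ => hA.eigenvalues_pos j)
  rw [hAv, hAinv_v, _root_.inv_pow]
  simpa only [_root_.zpow_neg, zpow_natCast] using jensen

lemma Real.sum_rpow_mul_rpow_le {ι : Type*} (s : Finset ι) {x y : ι → ℝ}
    (hx : ∀ i ∈ s, 0 ≤ x i) (hy : ∀ i ∈ s, 0 ≤ y i) {θ η : ℝ} (hθ : 0 ≤ θ) (hη : 0 ≤ η)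
    (hθη : θ + η = 1) :
    ∑ i ∈ s, x i ^ θ * y i ^ η ≤ (∑ i ∈ s, x i) ^ θ * (∑ i ∈ s, y i) ^ η := by
  rcases hθ.eq_or_lt with rfl | hθ
  · simp [show η = 1 by linarith]
  rcases hη.eq_or_lt with rfl | hη
  · simp [show θ = 1 by linarith]
  have holder := Real.inner_le_Lp_mul_Lq_of_nonneg s (Real.HolderConjugate.inv_inv hθ hη hθη)
    (fun i hi => Real.rpow_nonneg (hx i hi) θ) (fun i hi => Real.rpow_nonneg (hy i hi) η)
  have hxθ : ∀ i ∈ s, (x i ^ θ) ^ θ⁻¹ = x i := fun i hi => Real.rpow_rpow_inv (hx i hi) hθ.ne'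
  have hyη : ∀ i ∈ s, (y i ^ η) ^ η⁻¹ = y i := fun i hi => Real.rpow_rpow_inv (hy i hi) hη.ne'
  rwa [sum_congr rfl hxθ, sum_congr rfl hyη, one_div, one_div, inv_inv, inv_inv] at holder

lemma Real.sum_pow_le_rpow_mul_rpow {ι : Type*} (s : Finset ι) {a l : ι → ℝ}
    (ha : ∀ i ∈ s, 0 < a i) (hl : ∀ i ∈ s, 0 ≤ l i) (p : ℕ) :
    ∑ i ∈ s, l i ^ p ≤ (∑ i ∈ s, a i * l i ^ (p + 1)) ^ ((p : ℝ) / (p + 1)) *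
      (∑ i ∈ s, (a i)⁻¹ ^ p) ^ ((1 : ℝ) / (p + 1)) := by
  have factor : ∀ i ∈ s, (a i * l i ^ (p + 1)) ^ ((p : ℝ) / (p + 1)) *
      ((a i)⁻¹ ^ p) ^ ((1 : ℝ) / (p + 1)) = l i ^ p := by
    intro i hi
    have e1 : ((p + 1 : ℕ) : ℝ) * (p / (p + 1)) = p := by push_cast; field_simp
    have e2 : (p : ℝ) * (1 / (p + 1)) = p / (p + 1) := by ring
    rw [Real.mul_rpow (ha i hi).le (by positivity [hl i hi]), ← Real.rpow_natCast (l i) (p + 1),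
      ← Real.rpow_mul (hl i hi), e1, Real.rpow_natCast, inv_pow,
      Real.inv_rpow (by positivity [ha i hi]), ← Real.rpow_natCast (a i) p,
      ← Real.rpow_mul (ha i hi).le, e2, mul_right_comm,
      mul_inv_cancel₀ (by positivity [ha i hi]), one_mul]
  calc ∑ i ∈ s, l i ^ p = ∑ i ∈ s, (a i * l i ^ (p + 1)) ^ ((p : ℝ) / (p + 1)) *
        ((a i)⁻¹ ^ p) ^ ((1 : ℝ) / (p + 1)) := (sum_congr rfl factor).symm
    _ ≤ _ := Real.sum_rpow_mul_rpow_le s (fun i hi => by positivity [ha i hi, hl i hi])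
        (fun i hi => by positivity [ha i hi]) (by positivity) (by positivity) (by field_simp)

theorem stmt4_general {d : ℕ} (p : ℕ)
    (A B : Matrix (Fin d) (Fin d) ℝ) (hA : A.PosDef) (hB : B.PosDef) :
    (B⁻¹ ^ p).trace ≤
      ((A * B⁻¹ ^ (p + 1)).trace) ^ ((p : ℝ) / (p + 1)) *
        ((A⁻¹ ^ p).trace) ^ ((1 : ℝ) / (p + 1)) := by
  set u := hB.1.eigenvectorBasis
  have hu : ∀ i, ⇑(u i) ⬝ᵥ ⇑(u i) = 1 := u.dotProduct_self_eq_one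
  have hBu := hB.1.inv_pow_mulVec_eigenvectorBasis hB.isUnit
  have hμ : ∀ i, 0 < (hB.1.eigenvalues i)⁻¹ := fun i => inv_pos.2 (hB.eigenvalues_pos i)
  set a : Fin d → ℝ := fun i => ⇑(u i) ⬝ᵥ A *ᵥ ⇑(u i)
  have ha : ∀ i, 0 < a i := fun i => by
    simpa using hA.dotProduct_mulVec_pos (x := ⇑(u i)) (fun h => by simpa [h] using hu i)
  have trace_A : ∑ i, (a i)⁻¹ ^ p ≤ (A⁻¹ ^ p).trace := by
    rw [trace_eq_sum_star_dotProduct_mulVec _ u]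
    exact sum_le_sum fun i _ => by
      simpa only [star_trivial] using hA.inv_pow_le_dotProduct_inv_pow_mulVec (hu i) p
  calc (B⁻¹ ^ p).trace = ∑ i, (hB.1.eigenvalues i)⁻¹ ^ p :=
        u.trace_eq_sum_of_mulVec_eq_smul (hBu p)
    _ ≤ _ := Real.sum_pow_le_rpow_mul_rpow _ (fun i _ => ha i) (fun i _ => (hμ i).le) p
    _ ≤ _ := by
        rw [u.trace_mul_eq_sum_of_mulVec_eq_smul A (hBu (p + 1))]
        gcongr
        · exact Real.rpow_nonneg (sum_nonneg fun i _ => by positivity [ha i, hμ i]) _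
        · exact sum_nonneg fun i _ => by positivity [ha i]

theorem stmt4 {d : ℕ} (p : ℕ) (hp : 1 ≤ p)
    (A B : Matrix (Fin d) (Fin d) ℝ) (hA : A.PosDef) (hB : B.PosDef) :
    (B⁻¹ ^ p).trace ≤
      ((A * B⁻¹ ^ (p + 1)).trace) ^ ((p : ℝ) / (p + 1)) *
        ((A⁻¹ ^ p).trace) ^ ((1 : ℝ) / (p + 1)) :=
  stmt4_general p A B hA hB
end

section
/- Let d ≥ 1 be an integer, γ ∈ (0, 1/6] a real number, α := √d/γ, and Z a d×d real symmetric matrix with Z ⪰ (1−5γ)·I. Let c ∈ ℝ be such that αZ − cI is positive definite and tr((αZ − cI)^{−2}) = 1. Then for every vector v ∈ ℝ^d: vᵀ Z⁻¹ v ≤ α · vᵀ (αZ − cI)⁻¹ v ≤ α · λ_min(Z) · vᵀ Z⁻¹ v, where λ_min(Z) is the smallest eigenvalue of Z. -/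
/-!
Everything is a function of `Z`: with `λ` running over the spectrum of `Z` and `m(λ) = αλ - c`,
the matrices `Z⁻¹`, `α (αZ - c)⁻¹` and `α λ_min Z⁻¹` are `1/λ`, `α/m(λ)` and `α λ_min/λ` applied
to `Z`, so both Loewner inequalities reduce to scalar ones on the spectrum. These hold as soon as
`0 ≤ c ≤ α λ_min - 1`. The trace condition `∑ m(λᵢ)⁻² = 1` forces every `m(λᵢ) ≥ 1`, which gives
the upper bound on `c`, and some `m(λⱼ) ≤ √d`, so `c ≥ αλⱼ - √d ≥ α(1 - 5γ) - √d ≥ 0`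
because `γ ≤ 1/6`.
-/

open Matrix
open scoped MatrixOrder

theorem one_le_of_sum_inv_sq_eq_one {ι : Type*} [Fintype ι] {m : ι → ℝ} (hm : ∀ i, 0 < m i)
    (h : ∑ i, (m i)⁻¹ ^ 2 = 1) (i : ι) : 1 ≤ m i := by
  have hi : (m i)⁻¹ ^ 2 ≤ 1 :=
    h ▸ Finset.single_le_sum (fun j _ => sq_nonneg (m j)⁻¹) (Finset.mem_univ i)
  have : (m i)⁻¹ ≤ 1 := (sq_le_one_iff₀ (inv_nonneg.mpr (hm i).le)).mp hi
  exact (inv_le_one₀ (hm i)).mp this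

theorem exists_le_sqrt_card_of_sum_inv_sq_eq_one {ι : Type*} [Fintype ι] [Nonempty ι]
    {m : ι → ℝ} (h : ∑ i, (m i)⁻¹ ^ 2 = 1) : ∃ i, m i ≤ √(Fintype.card ι) := by
  by_contra! hlt
  have hcard : (0 : ℝ) < Fintype.card ι := by exact_mod_cast Fintype.card_pos
  have hterm (i : ι) : (m i)⁻¹ ^ 2 < (Fintype.card ι : ℝ)⁻¹ := by
    rw [← Real.sq_sqrt hcard.le, ← inv_pow]
    gcongr
    · exact inv_nonneg.mpr ((Real.sqrt_pos.mpr hcard).trans (hlt i)).le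
    · exact hlt i
  have := Finset.sum_lt_sum_of_nonempty Finset.univ_nonempty fun i _ => hterm i
  rw [h, Finset.sum_const, Finset.card_univ, nsmul_eq_mul, mul_inv_cancel₀ hcard.ne'] at this
  exact lt_irrefl _ this

theorem mem_Icc_of_sum_inv_sq_mul_sub_eq_one {ι : Type*} [Fintype ι] [Nonempty ι]
    {lam : ι → ℝ} {α c : ℝ} (hpos : ∀ i, 0 < α * lam i - c)
    (hsum : ∑ i, (α * lam i - c)⁻¹ ^ 2 = 1) (hlb : ∀ i, √(Fintype.card ι) ≤ α * lam i) :
    c ∈ Set.Icc 0 (α * (⨅ i, lam i) - 1) := by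
  obtain ⟨j, hj⟩ := exists_le_sqrt_card_of_sum_inv_sq_eq_one hsum
  obtain ⟨i₀, hi₀⟩ := exists_eq_ciInf_of_finite (f := lam)
  have := one_le_of_sum_inv_sq_eq_one hpos hsum i₀
  rw [← hi₀]
  constructor <;> linarith [hlb j]

namespace Matrix

variable {n : Type*} [Fintype n]

theorem dotProduct_mulVec_le_dotProduct_mulVec {A B : Matrix n n ℝ} (h : A ≤ B) (v : n → ℝ) :
    v ⬝ᵥ A *ᵥ v ≤ v ⬝ᵥ B *ᵥ v := by
  simpa [sub_mulVec, dotProduct_sub] using (le_iff.mp h).dotProduct_mulVec_nonneg v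

namespace IsHermitian

variable [DecidableEq n] {A : Matrix n n ℝ}

theorem trace_cfc (hA : A.IsHermitian) (f : ℝ → ℝ) :
    (cfc f A).trace = ∑ i, f (hA.eigenvalues i) := by
  rw [hA.cfc_eq, IsHermitian.cfc, Unitary.conjStarAlgAut_apply, trace_mul_cycle,
    Unitary.coe_star_mul_self, one_mul, trace_diagonal]
  simp

theorem cfc_inv (hA : A.IsHermitian) {f : ℝ → ℝ} (hf : ∀ x ∈ spectrum ℝ A, f x ≠ 0) :
    cfc (fun x => (f x)⁻¹) A = (cfc f A)⁻¹ := by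
  rw [nonsing_inv_eq_ringInverse, _root_.cfc_inv f A hf (A.finite_real_spectrum.continuousOn f)]

theorem cfc_mul_sub (hA : A.IsHermitian) (a c : ℝ) :
    cfc (fun x => a * x - c) A = a • A - c • 1 := by
  rw [cfc_sub (fun x => a * x) (fun _ => c) A, cfc_const_mul_id a A, cfc_const c A,
    Algebra.algebraMap_eq_smul_one]

theorem le_of_mem_spectrum_of_posSemidef_sub (hA : A.IsHermitian) {s : ℝ}
    (h : (A - s • 1).PosSemidef) : ∀ x ∈ spectrum ℝ A, s ≤ x := by
  rwa [← algebraMap_le_iff_le_spectrum, le_iff, Algebra.algebraMap_eq_smul_one]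

theorem mul_sub_pos_of_mem_spectrum_of_posDef (hA : A.IsHermitian) {a c : ℝ}
    (h : (a • A - c • 1).PosDef) : ∀ x ∈ spectrum ℝ A, 0 < a * x - c := by
  intro x hx
  refine h.isStrictlyPositive.spectrum_pos ?_
  rw [← hA.cfc_mul_sub, cfc_map_spectrum (fun x => a * x - c) A]
  exact Set.mem_image_of_mem _ hx

theorem trace_inv_smul_sub_smul_one_sq (hA : A.IsHermitian) {a c : ℝ}
    (h : ∀ x ∈ spectrum ℝ A, 0 < a * x - c) :
    ((a • A - c • 1)⁻¹ ^ 2).trace = ∑ i, (a * hA.eigenvalues i - c)⁻¹ ^ 2 := by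
  rw [← hA.cfc_mul_sub, ← hA.cfc_inv fun x hx => (h x hx).ne',
    ← cfc_pow _ 2 A (A.finite_real_spectrum.continuousOn _), hA.trace_cfc]

theorem inv_eq_cfc (hA : A.IsHermitian) (h : ∀ x ∈ spectrum ℝ A, x ≠ 0) :
    A⁻¹ = cfc (fun x : ℝ => x⁻¹) A := by
  rw [hA.cfc_inv (f := fun x => x) h, cfc_id' ℝ A]

theorem smul_inv_smul_sub_smul_one_eq_cfc (hA : A.IsHermitian) {a c : ℝ}
    (h : ∀ x ∈ spectrum ℝ A, 0 < a * x - c) :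
    a • (a • A - c • 1)⁻¹ = cfc (fun x => a * (a * x - c)⁻¹) A := by
  rw [cfc_const_mul a _ A (A.finite_real_spectrum.continuousOn _),
    hA.cfc_inv fun x hx => (h x hx).ne', hA.cfc_mul_sub]

theorem inv_le_smul_inv_smul_sub_smul_one (hA : A.IsHermitian) {a c : ℝ}
    (hpos : ∀ x ∈ spectrum ℝ A, 0 < x) (hm : ∀ x ∈ spectrum ℝ A, 0 < a * x - c) (hc : 0 ≤ c) :
    A⁻¹ ≤ a • (a • A - c • 1)⁻¹ := by
  rw [hA.inv_eq_cfc fun x hx => (hpos x hx).ne', hA.smul_inv_smul_sub_smul_one_eq_cfc hm]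
  refine cfc_mono (fun x hx => ?_) (A.finite_real_spectrum.continuousOn _)
    (A.finite_real_spectrum.continuousOn _)
  rw [← div_eq_mul_inv, inv_eq_one_div, div_le_div_iff₀ (hpos x hx) (hm x hx)]
  linarith

theorem smul_inv_smul_sub_smul_one_le (hA : A.IsHermitian) {a c L : ℝ}
    (hpos : ∀ x ∈ spectrum ℝ A, 0 < x) (hm : ∀ x ∈ spectrum ℝ A, 0 < a * x - c)
    (hL : ∀ x ∈ spectrum ℝ A, L ≤ x) (hc : 0 ≤ c) (hcL : c ≤ a * L - 1) :
    a • (a • A - c • 1)⁻¹ ≤ (a * L) • A⁻¹ := by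
  rw [hA.inv_eq_cfc fun x hx => (hpos x hx).ne', hA.smul_inv_smul_sub_smul_one_eq_cfc hm,
    ← cfc_const_mul _ _ A (A.finite_real_spectrum.continuousOn _)]
  refine cfc_mono (fun x hx => ?_) (A.finite_real_spectrum.continuousOn _)
    (A.finite_real_spectrum.continuousOn _)
  have ha : 0 < a := by nlinarith [hpos x hx, hm x hx]
  rw [← div_eq_mul_inv, ← div_eq_mul_inv, div_le_div_iff₀ (hm x hx) (hpos x hx)]
  nlinarith [mul_le_mul_of_nonneg_left (hL x hx) (by linarith : 0 ≤ a * L - 1)]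

end IsHermitian

end Matrix

theorem stmt5 {d : ℕ} (hd : 1 ≤ d) (γ : ℝ) (hγ0 : 0 < γ) (hγ : γ ≤ 1 / 6)
    (Z : Matrix (Fin d) (Fin d) ℝ) (hZh : Z.IsHermitian)
    (hZpsd : (Z - (1 - 5 * γ) • (1 : Matrix (Fin d) (Fin d) ℝ)).PosSemidef)
    (c : ℝ)
    (hc : ((Real.sqrt d / γ) • Z - c • (1 : Matrix (Fin d) (Fin d) ℝ)).PosDef)
    (htr : ((((Real.sqrt d / γ) • Z - c • (1 : Matrix (Fin d) (Fin d) ℝ))⁻¹) ^ 2).trace = 1)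
    (v : Fin d → ℝ) :
    v ⬝ᵥ Z⁻¹ *ᵥ v ≤
      (Real.sqrt d / γ) *
        (v ⬝ᵥ ((Real.sqrt d / γ) • Z - c • (1 : Matrix (Fin d) (Fin d) ℝ))⁻¹ *ᵥ v) ∧
    (Real.sqrt d / γ) *
        (v ⬝ᵥ ((Real.sqrt d / γ) • Z - c • (1 : Matrix (Fin d) (Fin d) ℝ))⁻¹ *ᵥ v) ≤
      (Real.sqrt d / γ) * (⨅ i, hZh.eigenvalues i) * (v ⬝ᵥ Z⁻¹ *ᵥ v) := by
  have : Nonempty (Fin d) := ⟨⟨0, hd⟩⟩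
  set α := Real.sqrt d / γ
  have hlb := hZh.le_of_mem_spectrum_of_posSemidef_sub hZpsd
  have hpos : ∀ x ∈ spectrum ℝ Z, 0 < x := fun x hx => by linarith [hlb x hx]
  have hm := hZh.mul_sub_pos_of_mem_spectrum_of_posDef hc
  have hsqrt (i : Fin d) : √(Fintype.card (Fin d)) ≤ α * hZh.eigenvalues i := by
    have := hlb _ (hZh.eigenvalues_mem_spectrum_real i)
    calc √(Fintype.card (Fin d)) = α * γ := by simp [α, hγ0.ne']
      _ ≤ α * hZh.eigenvalues i := by gcongr; linarith
  obtain ⟨hc0, hcL⟩ := mem_Icc_of_sum_inv_sq_mul_sub_eq_one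
    (fun i => hm _ (hZh.eigenvalues_mem_spectrum_real i))
    (hZh.trace_inv_smul_sub_smul_one_sq hm ▸ htr) hsqrt
  have hL : ∀ x ∈ spectrum ℝ Z, ⨅ i, hZh.eigenvalues i ≤ x := by
    rw [hZh.spectrum_real_eq_range_eigenvalues]
    rintro _ ⟨i, rfl⟩
    exact ciInf_le (Finite.bddBelow_range _) i
  constructor
  · simpa [smul_mulVec, dotProduct_smul] using dotProduct_mulVec_le_dotProduct_mulVec
      (hZh.inv_le_smul_inv_smul_sub_smul_one hpos hm hc0) v
  · simpa [smul_mulVec, dotProduct_smul, mul_assoc] using dotProduct_mulVec_le_dotProduct_mulVec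
      (hZh.smul_inv_smul_sub_smul_one_le hpos hm hL hc0 hcL) v
end

section
/- Let p ≥ 1 be an integer, u_1, …, u_n ∈ ℝ^d vectors, and k > 0 a real number. Suppose x ∈ [0,1]^n is an optimal solution of the convex relaxation: x minimizes y ↦ tr((Σ_{i=1}^{n} y(i)·u_i u_iᵀ)^{−p}) over all y ∈ [0,1]^n with Σ_{i=1}^{n} y(i) ≤ k and Σ_{i=1}^{n} y(i)·u_i u_iᵀ positive definite, and X := Σ_{i=1}^{n} x(i)·u_i u_iᵀ is positive definite. Then for every index i with 0 < x(i) < 1, it holds that u_iᵀ X^{−p−1} u_i ≤ (1/k) · tr(X^{−p}). -/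
/-!
Perturb the optimal design `x` along a feasible direction `v`. Since
`d/dt tr((X + tE)⁻ᵖ) = -p tr(X^{-(p+1)} E)` at `t = 0`, minimality of `x` forces
`∑ v_j g_j ≤ 0` for the gains `g_j = u_jᵀ X^{-(p+1)} u_j`. If the budget is slack, raising `x_i`
gives `g_i ≤ 0`. If it is tight, moving mass from any `j` with `x_j > 0` to `i` gives `g_i ≤ g_j`,
hence `k g_i = ∑ x_j g_i ≤ ∑ x_j g_j = tr(X⁻ᵖ)`.
-/

open Matrix Filter Topology

attribute [local instance] Matrix.linftyOpNormedAddCommGroup Matrix.linftyOpNormedRing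
  Matrix.linftyOpNormedAlgebra

theorem IsMinOn.nonneg_of_hasDerivAt_line {E : Type*} [NormedAddCommGroup E] [NormedSpace ℝ E]
    {f : E → ℝ} {S : Set E} {x v : E} {c : ℝ} (hmin : IsMinOn f S x)
    (hv : ∃ᶠ t : ℝ in 𝓝[>] 0, x + t • v ∈ S)
    (hf : HasDerivAt (fun t : ℝ => f (x + t • v)) c 0) : 0 ≤ c := by
  have hloc : IsLocalMinOn (fun t : ℝ => f (x + t • v)) {t | x + t • v ∈ S} 0 :=
    IsMinOn.localize fun t ht => by simpa using hmin ht
  have hone : (1 : ℝ) ∈ posTangentConeAt {t : ℝ | x + t • v ∈ S} 0 :=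
    mem_posTangentConeAt_of_frequently_mem (by simpa using hv)
  simpa using hloc.hasFDerivWithinAt_nonneg hf.hasFDerivAt.hasFDerivWithinAt hone

theorem hasDerivAt_ringInverse_add_smul {𝕜 R : Type*} [NontriviallyNormedField 𝕜] [NormedRing R]
    [NormedAlgebra 𝕜 R] [HasSummableGeomSeries R] (a : Rˣ) (e : R) :
    HasDerivAt (fun t : 𝕜 => Ring.inverse (↑a + t • e)) (-(↑a⁻¹ * e * ↑a⁻¹)) 0 := by
  have hline : HasDerivAt (fun t : 𝕜 => (a : R) + t • e) e 0 := by
    simpa using ((hasDerivAt_id (0 : 𝕜)).smul_const e).const_add (a : R)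
  exact (hasFDerivAt_ringInverse (𝕜 := 𝕜) a).comp_hasDerivAt_of_eq 0 hline (by simp)

theorem trace_pow_mul_mul_pow {m R : Type*} [Fintype m] [DecidableEq m] [CommSemiring R]
    (A E : Matrix m m R) {p i : ℕ} (hi : i < p) :
    (A ^ (p.pred - i) * (A * E * A) * A ^ i).trace = (A ^ (p + 1) * E).trace := by
  rw [trace_mul_comm, ← mul_assoc, ← mul_assoc, ← mul_assoc, ← pow_add, ← pow_succ,
    trace_mul_comm, ← mul_assoc, ← pow_succ']
  congr 3
  rw [Nat.pred_eq_sub_one]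
  omega

theorem hasDerivAt_trace_inv_add_smul_pow {𝕜 m : Type*} [RCLike 𝕜] [Fintype m] [DecidableEq m]
    {X : Matrix m m 𝕜} (hX : IsUnit X) (E : Matrix m m 𝕜) (p : ℕ) :
    HasDerivAt (fun t : 𝕜 => ((X + t • E)⁻¹ ^ p).trace) (-(p * (X⁻¹ ^ (p + 1) * E).trace)) 0 := by
  obtain ⟨a, rfl⟩ := hX
  have hinv : HasDerivAt (fun t : 𝕜 => ((a : Matrix m m 𝕜) + t • E)⁻¹)
      (-((a : Matrix m m 𝕜)⁻¹ * E * (a : Matrix m m 𝕜)⁻¹)) 0 := by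
    have h := hasDerivAt_ringInverse_add_smul (𝕜 := 𝕜) a E
    simp only [← nonsing_inv_eq_ringInverse, coe_units_inv] at h
    exact h
  let trace : Matrix m m 𝕜 →L[𝕜] 𝕜 := (traceLinearMap m 𝕜 𝕜).toContinuousLinearMap
  refine (trace.hasFDerivAt.comp_hasDerivAt (0 : 𝕜) (hinv.fun_pow' p)).congr_deriv ?_
  change Matrix.trace _ = _
  simp only [zero_smul, add_zero, mul_neg, neg_mul, trace_neg, trace_sum, Finset.sum_neg_distrib]
  rw [Finset.sum_congr rfl fun i hi => trace_pow_mul_mul_pow _ _ (Finset.mem_range.1 hi)]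
  simp

def weightedGram {ι m : Type*} [Fintype ι] (u : ι → m → ℝ) (y : ι → ℝ) : Matrix m m ℝ :=
  ∑ i, y i • vecMulVec (u i) (u i)

section weightedGram

variable {ι m : Type*} [Fintype ι] (u : ι → m → ℝ)

theorem weightedGram_add (x y : ι → ℝ) :
    weightedGram u (x + y) = weightedGram u x + weightedGram u y := by
  simp only [weightedGram, ← Finset.sum_add_distrib, Pi.add_apply, add_smul]

theorem weightedGram_smul (c : ℝ) (y : ι → ℝ) : weightedGram u (c • y) = c • weightedGram u y := by
  simp only [weightedGram, Finset.smul_sum, Pi.smul_apply, smul_eq_mul, smul_smul]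

theorem trace_mul_weightedGram [Fintype m] (M : Matrix m m ℝ) (v : ι → ℝ) :
    (M * weightedGram u v).trace = ∑ i, v i * (u i ⬝ᵥ M *ᵥ u i) := by
  simp only [weightedGram, Matrix.mul_sum, trace_sum, Matrix.mul_smul, trace_smul, smul_eq_mul]
  congr! 2 with i
  simp only [trace, diag, mul_apply, vecMulVec_apply, dotProduct, mulVec, Finset.mul_sum]
  exact Finset.sum_congr rfl fun _ _ => Finset.sum_congr rfl fun _ _ => by ring

theorem posSemidef_weightedGram [Fintype m] {y : ι → ℝ} (hy : 0 ≤ y) :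
    (weightedGram u y).PosSemidef :=
  posSemidef_sum _ fun i _ => (posSemidef_vecMulVec_self_star (u i)).smul (hy i)

theorem posDef_weightedGram_of_smul_le [Fintype m] {x y : ι → ℝ} {c : ℝ} (hc : 0 < c)
    (hxy : c • x ≤ y) (hx : (weightedGram u x).PosDef) : (weightedGram u y).PosDef := by
  have hsplit : weightedGram u y = c • weightedGram u x + weightedGram u (y - c • x) := by
    rw [← weightedGram_smul, ← weightedGram_add, add_sub_cancel]
  rw [hsplit]
  exact (hx.smul hc).add_posSemidef (posSemidef_weightedGram u (sub_nonneg.2 hxy))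

end weightedGram

theorem sum_mul_dotProduct_inv_pow_mulVec_nonpos {ι m : Type*} [Fintype ι] [Fintype m]
    [DecidableEq m] (u : ι → m → ℝ) {p : ℕ} (hp : 0 < p) {S : Set (ι → ℝ)} {x v : ι → ℝ}
    (hX : IsUnit (weightedGram u x))
    (hmin : IsMinOn (fun y => ((weightedGram u y)⁻¹ ^ p).trace) S x)
    (hv : ∃ᶠ t : ℝ in 𝓝[>] 0, x + t • v ∈ S) :
    ∑ i, v i * (u i ⬝ᵥ (weightedGram u x)⁻¹ ^ (p + 1) *ᵥ u i) ≤ 0 := by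
  have hderiv := hasDerivAt_trace_inv_add_smul_pow hX (weightedGram u v) p
  simp only [← weightedGram_smul, ← weightedGram_add] at hderiv
  have hslope := hmin.nonneg_of_hasDerivAt_line hv hderiv
  rw [← trace_mul_weightedGram]
  exact nonpos_of_mul_nonpos_right (neg_nonneg.1 hslope) (Nat.cast_pos.2 hp)

def feasibleDesigns {ι m : Type*} [Fintype ι] [Fintype m] (u : ι → m → ℝ) (k : ℝ) :
    Set (ι → ℝ) :=
  {y | (∀ i, y i ∈ Set.Icc 0 1) ∧ ∑ i, y i ≤ k ∧ (weightedGram u y).PosDef}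

section feasibleDesigns

variable {ι m : Type*} [Fintype ι] [Fintype m] [DecidableEq ι] {u : ι → m → ℝ} {k : ℝ}
  {x : ι → ℝ} {i j : ι}

theorem eventually_add_smul_single_mem_feasibleDesigns (hx : x ∈ feasibleDesigns u k)
    (hi : x i < 1) (hk : ∑ l, x l < k) :
    ∀ᶠ t : ℝ in 𝓝[>] 0, x + t • Pi.single i 1 ∈ feasibleDesigns u k := by
  filter_upwards [Ioo_mem_nhdsGT (sub_pos.2 hi), Ioo_mem_nhdsGT (sub_pos.2 hk)]
    with t ⟨ht0, hti⟩ ⟨_, htk⟩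
  have hle : x ≤ x + t • Pi.single i 1 := le_add_of_nonneg_right (smul_nonneg ht0.le (by simp))
  refine ⟨fun l => ?_, ?_, ?_⟩
  · rcases eq_or_ne l i with rfl | hl
    · simp only [Pi.add_apply, Pi.smul_apply, Pi.single_eq_same, smul_eq_mul, mul_one]
      constructor <;> linarith [(hx.1 l).1]
    · simpa [hl] using hx.1 l
  · simp only [Pi.add_apply, Pi.smul_apply, smul_eq_mul, Finset.sum_add_distrib, ← Finset.mul_sum,
      Finset.sum_pi_single', Finset.mem_univ, if_true, mul_one]
    linarith
  · exact posDef_weightedGram_of_smul_le u one_pos (by rwa [one_smul]) hx.2.2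

theorem eventually_add_smul_single_sub_single_mem_feasibleDesigns (hx : x ∈ feasibleDesigns u k)
    (hij : i ≠ j) (hi : x i < 1) (hj : 0 < x j) :
    ∀ᶠ t : ℝ in 𝓝[>] 0, x + t • (Pi.single i 1 - Pi.single j 1) ∈ feasibleDesigns u k := by
  filter_upwards [Ioo_mem_nhdsGT (sub_pos.2 hi), Ioo_mem_nhdsGT hj]
    with t ⟨ht0, hti⟩ ⟨_, htj⟩
  refine ⟨fun l => ?_, ?_, ?_⟩
  · rcases eq_or_ne l i with rfl | hli
    · simp [hij]
      constructor <;> linarith [(hx.1 l).1]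
    rcases eq_or_ne l j with rfl | hlj
    · simp [hli]
      constructor <;> linarith [(hx.1 l).2]
    simpa [hli, hlj] using hx.1 l
  · simp only [Pi.add_apply, Pi.smul_apply, Finset.sum_add_distrib, ← Finset.smul_sum,
      Pi.sub_apply, Finset.sum_sub_distrib, Finset.sum_pi_single', Finset.mem_univ, if_true,
      sub_self, smul_zero, add_zero]
    exact hx.2.1
  · have hc : 0 < 1 - t / x j := sub_pos.2 ((div_lt_one hj).2 htj)
    refine posDef_weightedGram_of_smul_le u hc (fun l => ?_) hx.2.2
    have hscale : t / x j * x j = t := div_mul_cancel₀ t hj.ne'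
    have hratio : 0 ≤ t / x j * x l := mul_nonneg (div_nonneg ht0.le hj.le) (hx.1 l).1
    rcases eq_or_ne l i with rfl | hli
    · simp [hij]
      linarith
    rcases eq_or_ne l j with rfl | hlj
    · simp [hli]
      linarith
    simp [hli, hlj]
    linarith

end feasibleDesigns

section optimality

variable {ι m : Type*} [Fintype ι] [Fintype m] [DecidableEq ι] [DecidableEq m]
  {u : ι → m → ℝ} {k : ℝ} {p : ℕ} {x : ι → ℝ} {i j : ι}

theorem dotProduct_inv_pow_mulVec_nonpos_of_sum_lt (hp : 0 < p) (hx : x ∈ feasibleDesigns u k)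
    (hmin : IsMinOn (fun y => ((weightedGram u y)⁻¹ ^ p).trace) (feasibleDesigns u k) x)
    (hi : x i < 1) (hk : ∑ l, x l < k) :
    u i ⬝ᵥ (weightedGram u x)⁻¹ ^ (p + 1) *ᵥ u i ≤ 0 := by
  simpa [Pi.single_apply] using sum_mul_dotProduct_inv_pow_mulVec_nonpos u hp hx.2.2.isUnit hmin
    (eventually_add_smul_single_mem_feasibleDesigns hx hi hk).frequently

theorem dotProduct_inv_pow_mulVec_le_of_lt_one_of_pos (hp : 0 < p)
    (hx : x ∈ feasibleDesigns u k)
    (hmin : IsMinOn (fun y => ((weightedGram u y)⁻¹ ^ p).trace) (feasibleDesigns u k) x)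
    (hi : x i < 1) (hj : 0 < x j) :
    u i ⬝ᵥ (weightedGram u x)⁻¹ ^ (p + 1) *ᵥ u i ≤
      u j ⬝ᵥ (weightedGram u x)⁻¹ ^ (p + 1) *ᵥ u j := by
  rcases eq_or_ne i j with rfl | hij
  · rfl
  have h := sum_mul_dotProduct_inv_pow_mulVec_nonpos u hp hx.2.2.isUnit hmin
    (eventually_add_smul_single_sub_single_mem_feasibleDesigns hx hij hi hj).frequently
  simp only [Pi.sub_apply, sub_mul, Finset.sum_sub_distrib, Pi.single_apply, ite_mul, one_mul,
    zero_mul, Finset.sum_ite_eq', Finset.mem_univ, if_true] at h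
  linarith

end optimality

theorem stmt7_general {d n : ℕ} (p : ℕ) (hp : 1 ≤ p)
    (u : Fin n → Fin d → ℝ) (k : ℝ) (hk : 0 < k)
    (x : Fin n → ℝ) (hx : ∀ i, x i ∈ Set.Icc (0 : ℝ) 1)
    (hsum : ∑ i, x i ≤ k)
    (hX : (∑ i, x i • vecMulVec (u i) (u i)).PosDef)
    (hopt : ∀ y : Fin n → ℝ, (∀ i, y i ∈ Set.Icc (0 : ℝ) 1) → ∑ i, y i ≤ k →
      (∑ i, y i • vecMulVec (u i) (u i)).PosDef →
      ((∑ i, x i • vecMulVec (u i) (u i))⁻¹ ^ p).trace ≤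
        ((∑ i, y i • vecMulVec (u i) (u i))⁻¹ ^ p).trace)
    (i : Fin n) (hi1 : x i < 1) :
    u i ⬝ᵥ ((∑ j, x j • vecMulVec (u j) (u j))⁻¹ ^ (p + 1)) *ᵥ u i ≤
      (1 / k) * ((∑ j, x j • vecMulVec (u j) (u j))⁻¹ ^ p).trace := by
  change u i ⬝ᵥ (weightedGram u x)⁻¹ ^ (p + 1) *ᵥ u i ≤ 1 / k * ((weightedGram u x)⁻¹ ^ p).trace
  replace hX : (weightedGram u x).PosDef := hX
  have hfeas : x ∈ feasibleDesigns u k := ⟨hx, hsum, hX⟩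
  have hmin : IsMinOn (fun y => ((weightedGram u y)⁻¹ ^ p).trace) (feasibleDesigns u k) x :=
    fun y hy => hopt y hy.1 hy.2.1 hy.2.2
  set g : Fin n → ℝ := fun j => u j ⬝ᵥ (weightedGram u x)⁻¹ ^ (p + 1) *ᵥ u j
  have htrace : ((weightedGram u x)⁻¹ ^ p).trace = ∑ j, x j * g j := by
    rw [← trace_mul_weightedGram, pow_succ, mul_assoc,
      nonsing_inv_mul _ ((isUnit_iff_isUnit_det _).1 hX.isUnit), mul_one]
  rcases hsum.lt_or_eq with hlt | heq
  · calc g i ≤ 0 := dotProduct_inv_pow_mulVec_nonpos_of_sum_lt hp hfeas hmin hi1 hlt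
      _ ≤ 1 / k * ((weightedGram u x)⁻¹ ^ p).trace :=
        mul_nonneg (by positivity) (hX.inv.posSemidef.pow p).trace_nonneg
  · rw [one_div, ← div_eq_inv_mul, le_div_iff₀ hk, htrace, ← heq, Finset.mul_sum]
    refine Finset.sum_le_sum fun j _ => ?_
    rcases (hx j).1.eq_or_lt with hj0 | hjpos
    · simp [← hj0]
    · rw [mul_comm]
      exact mul_le_mul_of_nonneg_left
        (dotProduct_inv_pow_mulVec_le_of_lt_one_of_pos hp hfeas hmin hi1 hjpos) hjpos.le

theorem stmt7 {d n : ℕ} (p : ℕ) (hp : 1 ≤ p)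
    (u : Fin n → Fin d → ℝ) (k : ℝ) (hk : 0 < k)
    (x : Fin n → ℝ) (hx : ∀ i, x i ∈ Set.Icc (0 : ℝ) 1)
    (hsum : ∑ i, x i ≤ k)
    (hX : (∑ i, x i • vecMulVec (u i) (u i)).PosDef)
    (hopt : ∀ y : Fin n → ℝ, (∀ i, y i ∈ Set.Icc (0 : ℝ) 1) → ∑ i, y i ≤ k →
      (∑ i, y i • vecMulVec (u i) (u i)).PosDef →
      ((∑ i, x i • vecMulVec (u i) (u i))⁻¹ ^ p).trace ≤
        ((∑ i, y i • vecMulVec (u i) (u i))⁻¹ ^ p).trace)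
    (i : Fin n) (hi0 : 0 < x i) (hi1 : x i < 1) :
    u i ⬝ᵥ ((∑ j, x j • vecMulVec (u j) (u j))⁻¹ ^ (p + 1)) *ᵥ u i ≤
      (1 / k) * ((∑ j, x j • vecMulVec (u j) (u j))⁻¹ ^ p).trace :=
  stmt7_general p hp u k hk x hx hsum hX hopt i hi1
end

section
/- For every real number x > 0 and every integer p ≥ 1, ((1 + p·x)/x) · ( (1/(1+x))^p − 1 + p·x/(1+x) ) ≤ 2·p²·x. -/
/-! With `u = x / (1 + x)` the bracket is `A = (1 - u) ^ p - 1 + p u`, and the left-hand side equals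
`A / x + p A`. The second-order Bernoulli bound `A ≤ (p choose 2) u²` controls `A / x`, the trivial
bound `A ≤ p u` controls `p A`, and `u ≤ x` turns each into `p² x`. -/

theorem one_sub_pow_le_one_sub_mul_add_choose_two_mul_sq {u : ℝ} (hu0 : 0 ≤ u) (hu1 : u ≤ 1)
    (n : ℕ) : (1 - u) ^ n ≤ 1 - n * u + n.choose 2 * u ^ 2 := by
  induction n with
  | zero => simp
  | succ n ih =>
    have hchoose : ((n + 1).choose 2 : ℝ) = n + n.choose 2 := by
      rw [Nat.choose_succ_succ, Nat.choose_one_right]; push_cast; ring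
    calc (1 - u) ^ (n + 1) = (1 - u) * (1 - u) ^ n := pow_succ' _ _
      _ ≤ (1 - u) * (1 - n * u + n.choose 2 * u ^ 2) := by gcongr
      _ = 1 - (n + 1) * u + (n + n.choose 2) * u ^ 2 - n.choose 2 * u ^ 3 := by ring
      _ ≤ 1 - ((n + 1 : ℕ) : ℝ) * u + ((n + 1).choose 2 : ℝ) * u ^ 2 := by
        rw [hchoose]; push_cast
        nlinarith [pow_nonneg hu0 3, (Nat.cast_nonneg (n.choose 2) : (0 : ℝ) ≤ _)]

theorem stmt9_general (x : ℝ) (hx : 0 < x) (p : ℕ) :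
    ((1 + p * x) / x) * ((1 / (1 + x)) ^ p - 1 + p * x / (1 + x)) ≤ 2 * p ^ 2 * x := by
  set u := x / (1 + x) with hu
  have hu0 : 0 ≤ u := by positivity
  have hux : u ≤ x := div_le_self hx.le (by linarith)
  have hu1 : u ≤ 1 := (div_le_one (by linarith)).2 (by linarith)
  have ht : 1 / (1 + x) = 1 - u := by rw [hu]; field_simp; ring
  have hpu : p * x / (1 + x) = p * u := by rw [hu]; ring
  rw [ht, hpu]
  set A := (1 - u) ^ p - 1 + p * u
  have hA_sq : A ≤ p ^ 2 * x * x := by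
    have hB := one_sub_pow_le_one_sub_mul_add_choose_two_mul_sq hu0 hu1 p
    have hc : (p.choose 2 : ℝ) ≤ p ^ 2 := by
      exact_mod_cast (Nat.choose_le_pow p 2).trans (by simp)
    calc A ≤ p.choose 2 * u ^ 2 := by linarith
      _ ≤ p ^ 2 * x ^ 2 := by gcongr
      _ = p ^ 2 * x * x := by ring
  have hA_lin : A ≤ p * x := by
    have : (1 - u) ^ p ≤ 1 := pow_le_one₀ (by linarith) (by linarith)
    have : (p : ℝ) * u ≤ p * x := by gcongr
    linarith
  calc (1 + p * x) / x * A = A / x + p * A := by field_simp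
    _ ≤ p ^ 2 * x + p * (p * x) := by gcongr; exact (div_le_iff₀ hx).2 hA_sq
    _ = 2 * p ^ 2 * x := by ring

theorem stmt9 (x : ℝ) (hx : 0 < x) (p : ℕ) (hp : 1 ≤ p) :
    ((1 + p * x) / x) * ((1 / (1 + x)) ^ p - 1 + p * x / (1 + x)) ≤ 2 * p ^ 2 * x :=
  stmt9_general x hx p
end

section
/- Let p ≥ 1 be an integer, Y a d×d real positive definite matrix, and w ∈ ℝ^d. Then 0 ≤ Σ_{i=1}^{p} C(p,i) · (−1)^{i+1} · (wᵀY⁻¹w)^{i−1} · (wᵀY^{−p−1}w) / (1 + wᵀY⁻¹w)^i ≤ p · wᵀY^{−p−1}w. -/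
open Matrix BigOperators Finset

/-!
With `a = wᵀY⁻¹w ≥ 0`, `b = wᵀY^{-p-1}w ≥ 0` and `u = (1 + a)⁻¹`, we have `1 - a u = u`, so
expanding binomially turns the alternating sum into `b (u + u² + ⋯ + uᵖ)`. Since `0 ≤ u ≤ 1`,
the geometric sum lies in `[0, p]`.
-/

theorem sum_range_choose_succ_mul_pow {R : Type*} [CommSemiring R] (y : R) (p : ℕ) :
    ∑ j ∈ range p, (p.choose (j + 1) : R) * y ^ j = ∑ k ∈ range p, (1 + y) ^ k := by
  induction p with
  | zero => simp
  | succ p ih =>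
    have pascal : ∑ j ∈ range (p + 1), ((p + 1).choose (j + 1) : R) * y ^ j
        = ∑ j ∈ range (p + 1), (p.choose j : R) * y ^ j
          + ∑ j ∈ range (p + 1), (p.choose (j + 1) : R) * y ^ j := by
      rw [← sum_add_distrib]
      refine sum_congr rfl fun j _ => ?_
      rw [Nat.choose_succ_succ', Nat.cast_add, add_mul]
    have binomial : ∑ j ∈ range (p + 1), (p.choose j : R) * y ^ j = (1 + y) ^ p := by
      simp only [add_comm 1 y, add_pow, one_pow, mul_one, mul_comm]
    rw [pascal, binomial, sum_range_succ (fun j => (p.choose (j + 1) : R) * y ^ j),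
      Nat.choose_succ_self, Nat.cast_zero, zero_mul, add_zero, ih, sum_range_succ, add_comm]

theorem sum_Icc_choose_mul_neg_one_pow_div_eq_sum_inv_pow {K : Type*} [Field K] (p : ℕ) (a : K)
    (ha : 1 + a ≠ 0) :
    ∑ i ∈ Icc 1 p, (p.choose i : K) * (-1) ^ (i + 1) * a ^ (i - 1) / (1 + a) ^ i
      = ∑ k ∈ range p, (1 + a)⁻¹ ^ (k + 1) := by
  have hy : 1 + -a / (1 + a) = (1 + a)⁻¹ := by field_simp; ring
  calc ∑ i ∈ Icc 1 p, (p.choose i : K) * (-1) ^ (i + 1) * a ^ (i - 1) / (1 + a) ^ i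
      = (∑ j ∈ range p, (p.choose (j + 1) : K) * (-a / (1 + a)) ^ j) * (1 + a)⁻¹ := by
        rw [← Ico_add_one_right_eq_Icc, sum_Ico_eq_sum_range, Nat.add_sub_cancel, sum_mul]
        refine sum_congr rfl fun j _ => ?_
        rw [add_comm 1 j, Nat.add_sub_cancel, div_pow, neg_pow]
        field_simp
        ring
    _ = ∑ k ∈ range p, (1 + a)⁻¹ ^ (k + 1) := by
        simp only [sum_range_choose_succ_mul_pow, hy, sum_mul, pow_succ]

theorem sum_range_pow_succ_mem_Icc {K : Type*} [Field K] [LinearOrder K] [IsStrictOrderedRing K]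
    {u : K} (hu₀ : 0 ≤ u) (hu₁ : u ≤ 1) (p : ℕ) :
    ∑ k ∈ range p, u ^ (k + 1) ∈ Set.Icc 0 (p : K) := by
  refine ⟨sum_nonneg fun k _ => pow_nonneg hu₀ _, ?_⟩
  simpa using sum_le_card_nsmul (range p) _ 1 fun k _ => pow_le_one₀ hu₀ hu₁

theorem stmt10_general {d : ℕ} (p : ℕ)
    (Y : Matrix (Fin d) (Fin d) ℝ) (hY : Y.PosDef) (w : Fin d → ℝ) :
    0 ≤ ∑ i ∈ Finset.Icc 1 p, (p.choose i : ℝ) * (-1 : ℝ) ^ (i + 1) *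
        (w ⬝ᵥ Y⁻¹ *ᵥ w) ^ (i - 1) * (w ⬝ᵥ (Y⁻¹ ^ (p + 1)) *ᵥ w) /
          (1 + w ⬝ᵥ Y⁻¹ *ᵥ w) ^ i ∧
    ∑ i ∈ Finset.Icc 1 p, (p.choose i : ℝ) * (-1 : ℝ) ^ (i + 1) *
        (w ⬝ᵥ Y⁻¹ *ᵥ w) ^ (i - 1) * (w ⬝ᵥ (Y⁻¹ ^ (p + 1)) *ᵥ w) /
          (1 + w ⬝ᵥ Y⁻¹ *ᵥ w) ^ i ≤
      p * (w ⬝ᵥ (Y⁻¹ ^ (p + 1)) *ᵥ w) := by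
  set a := w ⬝ᵥ Y⁻¹ *ᵥ w
  set b := w ⬝ᵥ (Y⁻¹ ^ (p + 1)) *ᵥ w
  have ha : 0 ≤ a := by
    simpa only [star_trivial] using hY.inv.posSemidef.dotProduct_mulVec_nonneg w
  have hb : 0 ≤ b := by
    simpa only [star_trivial] using (hY.inv.posSemidef.pow (p + 1)).dotProduct_mulVec_nonneg w
  have hsum : ∑ i ∈ Icc 1 p, (p.choose i : ℝ) * (-1) ^ (i + 1) * a ^ (i - 1) * b / (1 + a) ^ i
      = b * ∑ k ∈ range p, (1 + a)⁻¹ ^ (k + 1) := by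
    rw [← sum_Icc_choose_mul_neg_one_pow_div_eq_sum_inv_pow p a (by positivity), mul_sum]
    exact sum_congr rfl fun i _ => by ring
  obtain ⟨hS₀, hS₁⟩ := sum_range_pow_succ_mem_Icc (u := (1 + a)⁻¹) (by positivity)
    (inv_le_one_of_one_le₀ (by linarith)) p
  rw [hsum, mul_comm (p : ℝ)]
  exact ⟨mul_nonneg hb hS₀, mul_le_mul_of_nonneg_left hS₁ hb⟩

theorem stmt10 {d : ℕ} (p : ℕ) (hp : 1 ≤ p)
    (Y : Matrix (Fin d) (Fin d) ℝ) (hY : Y.PosDef) (w : Fin d → ℝ) :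
    0 ≤ ∑ i ∈ Finset.Icc 1 p, (p.choose i : ℝ) * (-1 : ℝ) ^ (i + 1) *
        (w ⬝ᵥ Y⁻¹ *ᵥ w) ^ (i - 1) * (w ⬝ᵥ (Y⁻¹ ^ (p + 1)) *ᵥ w) /
          (1 + w ⬝ᵥ Y⁻¹ *ᵥ w) ^ i ∧
    ∑ i ∈ Finset.Icc 1 p, (p.choose i : ℝ) * (-1 : ℝ) ^ (i + 1) *
        (w ⬝ᵥ Y⁻¹ *ᵥ w) ^ (i - 1) * (w ⬝ᵥ (Y⁻¹ ^ (p + 1)) *ᵥ w) /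
          (1 + w ⬝ᵥ Y⁻¹ *ᵥ w) ^ i ≤
      p * (w ⬝ᵥ (Y⁻¹ ^ (p + 1)) *ᵥ w) :=
  stmt10_general p Y hY w
end

section
/- Assume the experimental-design setup and let γ := 1/(6p), α := √d/γ. Suppose λ_min(Z_S) ∈ [1−5γ, 1). Then Σ_{j∈[m]∖S} (x(j)/M) · (1 + α·v_jᵀ A^{1/2} v_j) · (u_jᵀ Y_S^{−p−1} u_j / u_jᵀ Y_S⁻¹ u_j) · ( 1 − 1/(1 + u_jᵀ Y_S⁻¹ u_j)^p ) ≤ (p·α/M) · tr(X · Y_S^{−p−1}) ≤ (p·α·(1−5γ)^{−p−1}/M) · tr(X^{−p}), where the sum is over indices j ∉ S with u_j ≠ 0. -/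
/-!
Write `β = 1 - 5γ` and `N = αZ - cI`, so that `A = N⁻¹`. Since `tr N⁻² = 1`, no eigenvalue of
`N⁻¹` exceeds `1`, i.e. `N ≥ I`; as some eigenvalue of `Z` is below `1` and `α ≥ 1`, this forces
`N ≥ Z`. Hence `A ≤ Z⁻¹` and, conjugating by `W = X^{-1/2}`, `W A W ≤ Y⁻¹`, so
`v_jᵀ A v_j ≤ t_j := u_jᵀ Y⁻¹ u_j`. Bernoulli's inequality gives
`(1 + α t)(1 - (1 + t)⁻ᵖ) ≤ p α t`, which bounds the `j`-th summand by
`(p α / M) x_j u_jᵀ Y^{-p-1} u_j`; summing over all `j` yields `(p α / M) tr (X Y^{-p-1})`.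

For the second inequality, `Z ≥ βI` means `Y ≥ βX`. Then
`β tr (X Y^{-p-1}) ≤ tr (Y Y^{-p-1}) = tr Y⁻ᵖ`, and `Y⁻¹ ≤ β⁻¹ X⁻¹` together with the
monotonicity of `B ↦ tr Bᵖ` on positive semidefinite matrices gives `tr Y⁻ᵖ ≤ β⁻ᵖ tr X⁻ᵖ`.
-/

open Matrix
open scoped MatrixOrder ComplexOrder

namespace Matrix

variable {n 𝕜 : Type*} [RCLike 𝕜]

theorem PosDef.of_le {A B : Matrix n n 𝕜} (hA : A.PosDef) (hAB : A ≤ B) : B.PosDef := by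
  simpa using hA.add_posSemidef hAB

variable [Fintype n]

theorem dotProduct_mulVec_le_of_le {A B : Matrix n n ℝ} (h : A ≤ B) (y : n → ℝ) :
    y ⬝ᵥ A *ᵥ y ≤ y ⬝ᵥ B *ᵥ y := by
  have := (le_iff.mp h).dotProduct_mulVec_nonneg y
  simp only [star_trivial, sub_mulVec, dotProduct_sub] at this
  linarith

theorem mulVec_dotProduct_mulVec_mulVec (W B : Matrix n n ℝ) (y : n → ℝ) :
    (W *ᵥ y) ⬝ᵥ B *ᵥ (W *ᵥ y) = y ⬝ᵥ (Wᵀ * B * W) *ᵥ y := by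
  rw [Matrix.mul_assoc, ← mulVec_mulVec, ← mulVec_mulVec, dotProduct_mulVec y, vecMul_transpose]

theorem vecMulVec_mulVec_mulVec (W : Matrix n n ℝ) (y : n → ℝ) :
    vecMulVec (W *ᵥ y) (W *ᵥ y) = W * vecMulVec y y * Wᵀ := by
  rw [mul_vecMulVec, vecMulVec_mul, vecMul_transpose]

theorem trace_sum_smul_vecMulVec_mul {ι : Type*} [Fintype ι] (x : ι → ℝ) (u : ι → n → ℝ)
    (K : Matrix n n ℝ) :
    ((∑ i, x i • vecMulVec (u i) (u i)) * K).trace = ∑ i, x i * (u i ⬝ᵥ K *ᵥ u i) := by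
  simp only [Finset.sum_mul, trace_sum, Matrix.smul_mul, trace_smul, vecMulVec_mul,
    trace_vecMulVec, smul_eq_mul]
  refine Finset.sum_congr rfl fun i _ => ?_
  rw [dotProduct_mulVec, dotProduct_comm]

variable [DecidableEq n]

theorem trace_mul_nonneg {A B : Matrix n n 𝕜} (hA : 0 ≤ A) (hB : 0 ≤ B) :
    0 ≤ (A * B).trace := by
  have hS : star (CFC.sqrt B) * CFC.sqrt B = B := by
    rw [(CFC.sqrt_nonneg B).isSelfAdjoint.star_eq, CFC.sqrt_mul_sqrt_self B hB]
  rw [← hS, ← Matrix.mul_assoc, trace_mul_cycle]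
  exact (nonneg_iff_posSemidef.mp (star_right_conjugate_nonneg hA _)).trace_nonneg

theorem inv_le_inv_of_le {A B : Matrix n n 𝕜} (hA : A.PosDef) (hAB : A ≤ B) : B⁻¹ ≤ A⁻¹ := by
  have hB := hA.of_le hAB
  have := hA.isUnit.invertible
  have := hB.isUnit.invertible
  have := hA.inv.isUnit.invertible
  -- `fromBlocks B 1 1 A⁻¹ ≥ 0` iff one Schur complement `B - A` is, iff the other `A⁻¹ - B⁻¹` is
  have h := (PosDef.fromBlocks₂₂ B 1 hA.inv).mpr
    (by simpa [inv_inv_of_invertible] using le_iff.mp hAB)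
  simpa [le_iff] using (PosDef.fromBlocks₁₁ 1 A⁻¹ hB).mp (by simpa using h)

theorem IsHermitian.smul_one_le_iff {A : Matrix n n 𝕜} (hA : A.IsHermitian) (r : ℝ) :
    r • (1 : Matrix n n 𝕜) ≤ A ↔ ∀ i, r ≤ hA.eigenvalues i := by
  rw [← Algebra.algebraMap_eq_smul_one, algebraMap_le_iff_le_spectrum (a := A) hA.isSelfAdjoint,
    hA.spectrum_real_eq_range_eigenvalues]
  simp

theorem IsHermitian.smul_add_smul_one_nonneg_iff {A : Matrix n n 𝕜} (hA : A.IsHermitian)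
    (a b : ℝ) : 0 ≤ a • A + b • (1 : Matrix n n 𝕜) ↔ ∀ i, 0 ≤ a * hA.eigenvalues i + b := by
  have h : a • A + b • (1 : Matrix n n 𝕜) = cfc (fun t : ℝ => a * t + b) A := by
    rw [cfc_add .., cfc_const_mul .., cfc_id' .., cfc_const .., Algebra.algebraMap_eq_smul_one]
  rw [h, cfc_nonneg_iff (fun t : ℝ => a * t + b) A (ha := hA.isSelfAdjoint),
    hA.spectrum_real_eq_range_eigenvalues]
  simp

theorem IsHermitian.trace_pow {A : Matrix n n 𝕜} (hA : A.IsHermitian) (k : ℕ) :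
    (A ^ k).trace = ∑ i, (hA.eigenvalues i : 𝕜) ^ k := by
  conv_lhs => rw [hA.spectral_theorem]
  rw [← map_pow, Unitary.conjStarAlgAut_apply, trace_mul_cycle, Unitary.coe_star_mul_self,
    Matrix.one_mul, diagonal_pow, trace_diagonal]
  rfl

theorem PosDef.one_le_of_trace_inv_sq_le_one {N : Matrix n n 𝕜} (hN : N.PosDef)
    (h : (N⁻¹ ^ 2).trace ≤ 1) : 1 ≤ N := by
  have hP := hN.inv
  set μ := hP.isHermitian.eigenvalues
  have hsum : ∑ i, μ i ^ 2 ≤ 1 := by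
    rw [hP.isHermitian.trace_pow] at h
    exact_mod_cast h
  have hP1 : N⁻¹ ≤ 1 := by
    rw [← sub_nonneg, sub_eq_neg_add, ← one_smul ℝ (1 : Matrix n n 𝕜), ← neg_one_smul ℝ N⁻¹,
      hP.isHermitian.smul_add_smul_one_nonneg_iff]
    intro i
    have hi : μ i ^ 2 ≤ 1 :=
      (Finset.single_le_sum (fun j _ => sq_nonneg (μ j)) (Finset.mem_univ i)).trans hsum
    nlinarith [hP.eigenvalues_pos i]
  have := hN.isUnit.invertible
  simpa [inv_inv_of_invertible] using inv_le_inv_of_le hP hP1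

theorem IsHermitian.le_smul_sub_smul_one {Z : Matrix n n 𝕜} (hZ : Z.IsHermitian) {α c : ℝ}
    (hα : 1 ≤ α) (hle : ∃ j, hZ.eigenvalues j ≤ 1) (h : 1 ≤ α • Z - c • (1 : Matrix n n 𝕜)) :
    Z ≤ α • Z - c • (1 : Matrix n n 𝕜) := by
  have e₁ : α • Z - c • (1 : Matrix n n 𝕜) - 1 = α • Z + (-c - 1) • (1 : Matrix n n 𝕜) := by
    module
  have e₂ : α • Z - c • (1 : Matrix n n 𝕜) - Z = (α - 1) • Z + (-c) • (1 : Matrix n n 𝕜) := by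
    module
  rw [← sub_nonneg, e₁, hZ.smul_add_smul_one_nonneg_iff] at h
  rw [← sub_nonneg, e₂, hZ.smul_add_smul_one_nonneg_iff]
  obtain ⟨j, hj⟩ := hle
  intro i
  have hi := h i
  have hj' := h j
  rcases le_total (hZ.eigenvalues i) (hZ.eigenvalues j) with hij | hij <;> nlinarith

section Congruence

variable {W X Y A : Matrix n n 𝕜}

theorem smul_le_of_smul_one_le_conj (hW : W.PosDef) (hWX : W * W = X⁻¹) (hX : X.PosDef) {β : ℝ}
    (h : β • 1 ≤ W * Y * W) : β • X ≤ Y := by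
  have hWd := (isUnit_iff_isUnit_det W).mp hW.isUnit
  have := hX.isUnit.invertible
  convert hW.inv.isHermitian.isSelfAdjoint.conjugate_le_conjugate h using 1
  · rw [Matrix.mul_smul, Matrix.mul_one, Matrix.smul_mul, ← Matrix.mul_inv_rev, hWX,
      inv_inv_of_invertible]
  · simp only [← Matrix.mul_assoc, nonsing_inv_mul _ hWd, Matrix.one_mul,
      mul_nonsing_inv_cancel_right _ _ hWd]

theorem conj_le_inv_of_le_inv_conj (hW : W.PosDef) (h : A ≤ (W * Y * W)⁻¹) :
    W * A * W ≤ Y⁻¹ := by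
  have hWd := (isUnit_iff_isUnit_det W).mp hW.isUnit
  convert hW.isHermitian.isSelfAdjoint.conjugate_le_conjugate h using 1
  rw [Matrix.mul_inv_rev, Matrix.mul_inv_rev, ← Matrix.mul_assoc, ← Matrix.mul_assoc,
    mul_nonsing_inv _ hWd, Matrix.one_mul, Matrix.mul_assoc, nonsing_inv_mul _ hWd, Matrix.mul_one]

end Congruence

-- any normed-algebra structure on matrices will do; it is only used to differentiate
attribute [local instance] Matrix.linftyOpNormedRing Matrix.linftyOpNormedAlgebra in
theorem trace_pow_le_trace_pow {A B : Matrix n n ℝ} (hA : 0 ≤ A) (hAB : A ≤ B) (k : ℕ) :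
    (A ^ k).trace ≤ (B ^ k).trace := by
  set Δ := B - A
  have hΔ : 0 ≤ Δ := sub_nonneg.mpr hAB
  have hpath : ∀ t : ℝ, HasDerivAt (fun s : ℝ => ((A + s • Δ) ^ k).trace)
      (∑ i ∈ Finset.range k, (A + t • Δ) ^ (k.pred - i) * Δ * (A + t • Δ) ^ i).trace t := by
    intro t
    have h := (((hasDerivAt_id t).smul_const Δ).const_add A).fun_pow' k
    simp only [id, one_smul] at h
    exact (traceLinearMap n ℝ ℝ).toContinuousLinearMap.hasFDerivAt.comp_hasDerivAt t h
  -- along the segment from `A` to `B` the derivative is a sum of traces `tr (Mᵏ⁻¹ Δ) ≥ 0`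
  have hmono : MonotoneOn (fun s : ℝ => ((A + s • Δ) ^ k).trace) (Set.Ici 0) := by
    refine monotoneOn_of_hasDerivWithinAt_nonneg (convex_Ici 0)
      (fun t _ => (hpath t).continuousAt.continuousWithinAt)
      (fun t _ => (hpath t).hasDerivWithinAt) fun t ht => ?_
    rw [interior_Ici] at ht
    have hM : 0 ≤ A + t • Δ := add_nonneg hA (smul_nonneg ht.le hΔ)
    rw [trace_sum]
    refine Finset.sum_nonneg fun i _ => ?_
    rw [trace_mul_cycle, ← pow_add]
    exact trace_mul_nonneg (nonneg_iff_posSemidef.mpr ((nonneg_iff_posSemidef.mp hM).pow _)) hΔ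
  simpa [Δ] using hmono (Set.mem_Ici.mpr le_rfl) (Set.mem_Ici.mpr zero_le_one) zero_le_one

theorem trace_mul_inv_pow_succ_le {X Y : Matrix n n ℝ} (hX : X.PosDef) {β : ℝ} (hβ : 0 < β)
    (h : β • X ≤ Y) (p : ℕ) :
    (X * Y⁻¹ ^ (p + 1)).trace ≤ (X⁻¹ ^ p).trace / β ^ (p + 1) := by
  have hβX : (β • X).PosDef := hX.smul hβ
  have hY := hβX.of_le h
  have hYd := (isUnit_iff_isUnit_det Y).mp hY.isUnit
  have hXd := (isUnit_iff_isUnit_det X).mp hX.isUnit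
  have hYK : (Y * Y⁻¹ ^ (p + 1)).trace = (Y⁻¹ ^ p).trace := by
    rw [pow_succ', ← Matrix.mul_assoc, mul_nonsing_inv _ hYd, Matrix.one_mul]
  have h₁ : β * (X * Y⁻¹ ^ (p + 1)).trace ≤ (Y⁻¹ ^ p).trace := by
    have := trace_mul_nonneg (sub_nonneg.mpr h)
      (nonneg_iff_posSemidef.mpr (hY.inv.posSemidef.pow (p + 1)))
    rw [Matrix.sub_mul, trace_sub, Matrix.smul_mul, trace_smul, hYK, smul_eq_mul] at this
    linarith
  have h₂ : (Y⁻¹ ^ p).trace ≤ β⁻¹ ^ p * (X⁻¹ ^ p).trace := by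
    have := invertibleOfNonzero hβ.ne'
    calc (Y⁻¹ ^ p).trace ≤ ((β • X)⁻¹ ^ p).trace :=
          trace_pow_le_trace_pow (nonneg_iff_posSemidef.mpr hY.inv.posSemidef)
            (inv_le_inv_of_le hβX h) p
      _ = β⁻¹ ^ p * (X⁻¹ ^ p).trace := by
          rw [Matrix.inv_smul _ _ hXd, invOf_eq_inv, smul_pow, trace_smul, smul_eq_mul]
  rw [le_div_iff₀ (by positivity)]
  calc (X * Y⁻¹ ^ (p + 1)).trace * β ^ (p + 1)
        = β ^ p * (β * (X * Y⁻¹ ^ (p + 1)).trace) := by ring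
    _ ≤ β ^ p * (β⁻¹ ^ p * (X⁻¹ ^ p).trace) :=
        mul_le_mul_of_nonneg_left (h₁.trans h₂) (by positivity)
    _ = (X⁻¹ ^ p).trace := by
        rw [← mul_assoc, ← mul_pow, mul_inv_cancel₀ hβ.ne', one_pow, one_mul]

end Matrix

theorem one_add_mul_one_sub_one_div_pow_le (p : ℕ) {t : ℝ} (ht : 0 ≤ t) :
    (1 + t) * (1 - 1 / (1 + t) ^ p) ≤ p * t := by
  set q := 1 / (1 + t) with hq
  have hq0 : 0 ≤ q := by positivity
  have hq1 : q ≤ 1 := div_le_one_of_le₀ (by linarith) (by linarith)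
  -- Bernoulli: `1 - p (1 - q) ≤ q ^ p`
  have hb := one_add_mul_le_pow (a := q - 1) (by linarith) p
  rw [add_sub_cancel] at hb
  calc (1 + t) * (1 - 1 / (1 + t) ^ p) = (1 + t) * (1 - q ^ p) := by rw [hq, div_pow, one_pow]
    _ ≤ (1 + t) * (p * (1 - q)) := mul_le_mul_of_nonneg_left (by linarith) (by linarith)
    _ = p * t := by rw [hq]; field_simp; ring

theorem design_term_le (p : ℕ) {α s t r x M : ℝ} (hα : 1 ≤ α) (hst : s ≤ t) (ht : 0 < t)
    (hr : 0 ≤ r) (hx : 0 ≤ x) (hM : 0 < M) :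
    x / M * (1 + α * s) * (r / t) * (1 - 1 / (1 + t) ^ p) ≤ p * α / M * (x * r) := by
  have hq : 0 ≤ 1 - 1 / (1 + t) ^ p :=
    sub_nonneg.mpr (div_le_one_of_le₀ (one_le_pow₀ (by linarith)) (by positivity))
  have key : (1 + α * s) * (1 - 1 / (1 + t) ^ p) ≤ p * α * t :=
    calc (1 + α * s) * (1 - 1 / (1 + t) ^ p) ≤ α * (1 + t) * (1 - 1 / (1 + t) ^ p) :=
          mul_le_mul_of_nonneg_right (by nlinarith) hq
      _ ≤ α * (p * t) := by
          rw [mul_assoc]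
          exact mul_le_mul_of_nonneg_left (one_add_mul_one_sub_one_div_pow_le p ht.le)
            (by linarith)
      _ = p * α * t := by ring
  calc x / M * (1 + α * s) * (r / t) * (1 - 1 / (1 + t) ^ p)
        = x / M * (r / t) * ((1 + α * s) * (1 - 1 / (1 + t) ^ p)) := by ring
    _ ≤ x / M * (r / t) * (p * α * t) := mul_le_mul_of_nonneg_left key (by positivity)
    _ = p * α / M * (x * r) := by field_simp

theorem sum_design_terms_le_trace {ι n : Type*} [Fintype ι] [Fintype n] (p : ℕ) {α M : ℝ}
    (hα : 1 ≤ α) (hM : 0 < M) {x : ι → ℝ} (hx : ∀ i, 0 ≤ x i) {u v : ι → n → ℝ}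
    {A Q K : Matrix n n ℝ} (hQ : Q.PosDef) (hK : 0 ≤ K)
    (hvu : ∀ j, v j ⬝ᵥ A *ᵥ v j ≤ u j ⬝ᵥ Q *ᵥ u j) (s : Finset ι) (hs : ∀ j ∈ s, u j ≠ 0) :
    ∑ j ∈ s, x j / M * (1 + α * (v j ⬝ᵥ A *ᵥ v j)) *
        ((u j ⬝ᵥ K *ᵥ u j) / (u j ⬝ᵥ Q *ᵥ u j)) * (1 - 1 / (1 + u j ⬝ᵥ Q *ᵥ u j) ^ p) ≤
      p * α / M * ((∑ i, x i • vecMulVec (u i) (u i)) * K).trace := by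
  have hKu : ∀ j, 0 ≤ u j ⬝ᵥ K *ᵥ u j := fun j => by
    simpa using (nonneg_iff_posSemidef.mp hK).dotProduct_mulVec_nonneg (u j)
  rw [trace_sum_smul_vecMulVec_mul, Finset.mul_sum]
  calc _ ≤ ∑ j ∈ s, p * α / M * (x j * (u j ⬝ᵥ K *ᵥ u j)) :=
        Finset.sum_le_sum fun j hj => design_term_le p hα (hvu j)
          (by simpa using hQ.dotProduct_mulVec_pos (hs j hj)) (hKu j) (hx j) hM
    _ ≤ _ := Finset.sum_le_sum_of_subset_of_nonneg (Finset.subset_univ s) fun j _ _ =>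
        mul_nonneg (div_nonneg (by positivity) hM.le) (mul_nonneg (hx j) (hKu j))

theorem one_sub_five_mul_pos_and_one_le {d p : ℕ} (hd : 0 < d) (hp : 1 ≤ p) {γ α : ℝ}
    (hγ : γ = 1 / (6 * p)) (hα : α = √d / γ) : 0 < 1 - 5 * γ ∧ 1 ≤ α := by
  have hγ0 : 0 < γ := by rw [hγ]; positivity
  have hγ6 : γ ≤ 1 / 6 := by rw [hγ]; gcongr; norm_cast; omega
  refine ⟨by linarith, ?_⟩
  rw [hα, le_div_iff₀ hγ0]
  nlinarith [Real.one_le_sqrt.mpr (show (1 : ℝ) ≤ d by exact_mod_cast hd)]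

open scoped Classical in
theorem stmt15_general {d m : ℕ} (hd : 0 < d) (p : ℕ) (hp : 1 ≤ p)
    (u : Fin m → Fin d → ℝ)
    (x : Fin m → ℝ) (hx : ∀ i, x i ∈ Set.Icc (0 : ℝ) 1)
    (X : Matrix (Fin d) (Fin d) ℝ) (hXdef : X = ∑ i, x i • vecMulVec (u i) (u i))
    (hX : X.PosDef)
    -- W is the inverse square root X^{-1/2}
    (W : Matrix (Fin d) (Fin d) ℝ) (hW : W.PosDef) (hW2 : W * W = X⁻¹)
    (v : Fin m → Fin d → ℝ) (hv : ∀ i, v i = W *ᵥ u i)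
    (S : Finset (Fin m))
    (Y Z : Matrix (Fin d) (Fin d) ℝ)
    (hY : Y = ∑ i ∈ S, vecMulVec (u i) (u i))
    (hZ : Z = ∑ i ∈ S, vecMulVec (v i) (v i))
    (M : ℝ) (hM : 0 < M)
    (γ α : ℝ) (hγ : γ = 1 / (6 * p)) (hα : α = Real.sqrt d / γ)
    (c : ℝ) (hc : (α • Z - c • (1 : Matrix (Fin d) (Fin d) ℝ)).PosDef)
    (htrc : (((α • Z - c • (1 : Matrix (Fin d) (Fin d) ℝ))⁻¹) ^ 2).trace = 1)
    (A : Matrix (Fin d) (Fin d) ℝ)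
    (hA : A = (α • Z - c • (1 : Matrix (Fin d) (Fin d) ℝ))⁻¹)
    (hZh : Z.IsHermitian)
    (hmin : 1 - 5 * γ ≤ ⨅ i, hZh.eigenvalues i)
    (hmax : (⨅ i, hZh.eigenvalues i) < 1) :
    ∑ j ∈ Sᶜ.filter (fun j => u j ≠ 0), (x j / M) * (1 + α * (v j ⬝ᵥ A *ᵥ v j)) *
        ((u j ⬝ᵥ (Y⁻¹ ^ (p + 1)) *ᵥ u j) / (u j ⬝ᵥ Y⁻¹ *ᵥ u j)) *
        (1 - 1 / (1 + u j ⬝ᵥ Y⁻¹ *ᵥ u j) ^ p) ≤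
      ((p : ℝ) * α / M) * (X * (Y⁻¹ ^ (p + 1))).trace ∧
    ((p : ℝ) * α / M) * (X * (Y⁻¹ ^ (p + 1))).trace ≤
      ((p : ℝ) * α / ((1 - 5 * γ) ^ (p + 1) * M)) * (X⁻¹ ^ p).trace := by
  have : Nonempty (Fin d) := ⟨⟨0, hd⟩⟩
  obtain ⟨hβ, hα1⟩ := one_sub_five_mul_pos_and_one_le hd hp hγ hα
  have hWt : Wᵀ = W := by simpa using hW.isHermitian.eq
  have hZWYW : Z = W * Y * W := by
    simp only [hZ, hY, hv, vecMulVec_mulVec_mulVec, hWt, Finset.mul_sum, Finset.sum_mul]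
  have hZβ : (1 - 5 * γ) • (1 : Matrix (Fin d) (Fin d) ℝ) ≤ Z :=
    (hZh.smul_one_le_iff _).mpr fun i => hmin.trans (ciInf_le (Finite.bddBelow_range _) i)
  have hYX := smul_le_of_smul_one_le_conj hW hW2 hX (hZWYW ▸ hZβ)
  have hZN := hZh.le_smul_sub_smul_one hα1
    (let ⟨j, hj⟩ := exists_lt_of_ciInf_lt hmax; ⟨j, hj.le⟩)
    (hc.one_le_of_trace_inv_sq_le_one htrc.le)
  have hWAW : W * A * W ≤ Y⁻¹ := conj_le_inv_of_le_inv_conj hW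
    (hZWYW ▸ hA ▸ inv_le_inv_of_le ((PosDef.one.smul hβ).of_le hZβ) hZN)
  have hY := ((hX.smul hβ).of_le hYX).inv
  refine ⟨hXdef ▸ sum_design_terms_le_trace p hα1 hM (fun i => (hx i).1) hY
    (nonneg_iff_posSemidef.mpr (hY.posSemidef.pow _)) (fun j => ?_) _
    (fun j hj => (Finset.mem_filter.mp hj).2), ?_⟩
  · rw [hv j, mulVec_dotProduct_mulVec_mulVec, hWt]
    exact dotProduct_mulVec_le_of_le hWAW (u j)
  · calc _ ≤ p * α / M * ((X⁻¹ ^ p).trace / (1 - 5 * γ) ^ (p + 1)) :=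
          mul_le_mul_of_nonneg_left (trace_mul_inv_pow_succ_le hX hβ hYX p)
            (div_nonneg (by positivity) hM.le)
      _ = _ := by field_simp

open scoped Classical in
theorem stmt15 {d m : ℕ} (hd : 0 < d) (hm : 0 < m) (p : ℕ) (hp : 1 ≤ p)
    (u : Fin m → Fin d → ℝ)
    (x : Fin m → ℝ) (hx : ∀ i, x i ∈ Set.Icc (0 : ℝ) 1)
    (X : Matrix (Fin d) (Fin d) ℝ) (hXdef : X = ∑ i, x i • vecMulVec (u i) (u i))
    (hX : X.PosDef)
    -- W is the inverse square root X^{-1/2}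
    (W : Matrix (Fin d) (Fin d) ℝ) (hW : W.PosDef) (hW2 : W * W = X⁻¹)
    (v : Fin m → Fin d → ℝ) (hv : ∀ i, v i = W *ᵥ u i)
    (S : Finset (Fin m))
    (Y Z : Matrix (Fin d) (Fin d) ℝ)
    (hY : Y = ∑ i ∈ S, vecMulVec (u i) (u i))
    (hZ : Z = ∑ i ∈ S, vecMulVec (v i) (v i))
    (M : ℝ) (hM : 0 < M)
    (γ α : ℝ) (hγ : γ = 1 / (6 * p)) (hα : α = Real.sqrt d / γ)
    (c : ℝ) (hc : (α • Z - c • (1 : Matrix (Fin d) (Fin d) ℝ)).PosDef)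
    (htrc : (((α • Z - c • (1 : Matrix (Fin d) (Fin d) ℝ))⁻¹) ^ 2).trace = 1)
    (A : Matrix (Fin d) (Fin d) ℝ)
    (hA : A = (α • Z - c • (1 : Matrix (Fin d) (Fin d) ℝ))⁻¹)
    (hZh : Z.IsHermitian)
    (hmin : 1 - 5 * γ ≤ ⨅ i, hZh.eigenvalues i)
    (hmax : (⨅ i, hZh.eigenvalues i) < 1) :
    ∑ j ∈ Sᶜ.filter (fun j => u j ≠ 0), (x j / M) * (1 + α * (v j ⬝ᵥ A *ᵥ v j)) *
        ((u j ⬝ᵥ (Y⁻¹ ^ (p + 1)) *ᵥ u j) / (u j ⬝ᵥ Y⁻¹ *ᵥ u j)) *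
        (1 - 1 / (1 + u j ⬝ᵥ Y⁻¹ *ᵥ u j) ^ p) ≤
      ((p : ℝ) * α / M) * (X * (Y⁻¹ ^ (p + 1))).trace ∧
    ((p : ℝ) * α / M) * (X * (Y⁻¹ ^ (p + 1))).trace ≤
      ((p : ℝ) * α / ((1 - 5 * γ) ^ (p + 1) * M)) * (X⁻¹ ^ p).trace :=
  stmt15_general hd p hp u x hx X hXdef hX W hW hW2 v hv S Y Z hY hZ M hM γ α hγ hα c hc htrc A hA
    hZh hmin hmax
end
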